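/- arXiv:1812.11562 — 8 statements merged into one kernel-verified Lean document; each statement's English description precedes it below -/
import Mathlib

section
/- Let α > 0, let k be a positive integer, and let G be a graph that is a (k,α)-expander. Then G is a (3k/2, α/6)-expander, or there is a vertex subset V₀ ⊆ V(G) of size |V₀| ≥ 2k/3 such that the induced subgraph G[V₀] is an (α/2)-expander. -/
/-!
Take `U` with `|U| ≤ 3k/2` and `|N(U)| < (α/6)|U|`; then `|U| > k`. Among the sets `D ⊆ U` with
`|D| ≤ k` and `|N(D) ∩ U| ≤ (α/2)|D|` pick one of maximal size. Since `D` expands by `α` in `G`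
but by only `α/2` inside `U`, at least `(α/2)|D|` of its neighbours lie in `N(U)`, so `|D| < |U|/3`.
If `G[U \ D]` had a set `S` with `|S| ≤ |U \ D|/2` expanding by less than `α/2`, then `D ∪ S`
would be admissible (`|D ∪ S| ≤ (|U| + |D|)/2 < 2|U|/3 ≤ k`) and larger than `D`.
Hence `V₀ = U \ D` is an `α/2`-expander with `|V₀| > 2|U|/3 > 2k/3`.
-/

open scoped Classical

/-- The external neighborhood of a vertex set `U` in a simple graph `G`:
all vertices outside `U` having a neighbor in `U`. -/
def SimpleGraph.extNb {V : Type*} (G : SimpleGraph V) (U : Set V) : Set V :=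
  {v | v ∉ U ∧ ∃ u ∈ U, G.Adj u v}

/-- A graph `G` on `n` vertices is an `α`-expander if every vertex subset `U` with
`|U| ≤ n/2` satisfies `|N_G(U)| ≥ α |U|`. -/
def SimpleGraph.IsExpander {V : Type*} [Fintype V] (G : SimpleGraph V) (α : ℝ) : Prop :=
  ∀ U : Set V, (U.ncard : ℝ) ≤ (Fintype.card V : ℝ) / 2 →
    α * U.ncard ≤ ((G.extNb U).ncard : ℝ)

/-- `G` is a `(k, α)`-expander if every vertex subset `U` with `|U| ≤ k`
satisfies `|N_G(U)| ≥ α |U|`. -/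
def SimpleGraph.IsKExpander {V : Type*} (G : SimpleGraph V) (k α : ℝ) : Prop :=
  ∀ U : Set V, (U.ncard : ℝ) ≤ k → α * U.ncard ≤ ((G.extNb U).ncard : ℝ)

namespace SimpleGraph

variable {V : Type*} (G : SimpleGraph V)

lemma image_val_extNb_induce (W : Set V) (S : Set W) :
    Subtype.val '' ((G.induce W).extNb S) = G.extNb (Subtype.val '' S) ∩ W := by
  ext v
  simp only [extNb, Set.mem_image, Set.mem_inter_iff, Set.mem_ofPred_eq, comap_adj,
    Function.Embedding.coe_subtype]
  constructor
  · rintro ⟨⟨v, hvW⟩, ⟨hvS, u, huS, hadj⟩, rfl⟩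
    exact ⟨⟨fun ⟨x, hxS, hxv⟩ => hvS (Subtype.ext hxv ▸ hxS), u, ⟨u, huS, rfl⟩, hadj⟩, hvW⟩
  · rintro ⟨⟨hvS, _, ⟨u, huS, rfl⟩, hadj⟩, hvW⟩
    exact ⟨⟨v, hvW⟩, ⟨fun hv => hvS ⟨_, hv, rfl⟩, u, huS, hadj⟩, rfl⟩

lemma extNb_subset_inter_union_extNb {D U : Set V} (hDU : D ⊆ U) :
    G.extNb D ⊆ G.extNb D ∩ U ∪ G.extNb U := by
  rintro v ⟨hvD, u, huD, hadj⟩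
  by_cases hvU : v ∈ U
  · exact Or.inl ⟨⟨hvD, u, huD, hadj⟩, hvU⟩
  · exact Or.inr ⟨hvU, u, hDU huD, hadj⟩

lemma extNb_union_subset (D S : Set V) : G.extNb (D ∪ S) ⊆ G.extNb D ∪ G.extNb S \ D := by
  rintro v ⟨hvDS, u, huD | huS, hadj⟩
  · exact Or.inl ⟨fun h => hvDS (Or.inl h), u, huD, hadj⟩
  · exact Or.inr ⟨⟨fun h => hvDS (Or.inr h), u, huS, hadj⟩, fun h => hvDS (Or.inl h)⟩

lemma isExpander_induce_of_forall_subset {β : ℝ} {W : Set V} [Fintype W]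
    (hW : ∀ S ⊆ W, (S.ncard : ℝ) ≤ W.ncard / 2 → β * S.ncard ≤ (G.extNb S ∩ W).ncard) :
    (G.induce W).IsExpander β := by
  intro S hS
  have hcard : ∀ T : Set W, (Subtype.val '' T).ncard = T.ncard := fun T =>
    Set.ncard_image_of_injective T Subtype.val_injective
  rw [← hcard, ← hcard, image_val_extNb_induce]
  refine hW _ (Subtype.coe_image_subset W S) ?_
  rwa [hcard, ← Nat.card_coe_set_eq W, Nat.card_eq_fintype_card]

@[simp]
lemma extNb_empty : G.extNb ∅ = ∅ := by
  simp [extNb]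

lemma ncard_extNb_union_inter_le [Finite V] {γ : ℝ} {D S U : Set V} (hDS : Disjoint D S)
    (hD : ((G.extNb D ∩ U).ncard : ℝ) ≤ γ * D.ncard)
    (hS : ((G.extNb S ∩ (U \ D)).ncard : ℝ) ≤ γ * S.ncard) :
    ((G.extNb (D ∪ S) ∩ U).ncard : ℝ) ≤ γ * (D ∪ S).ncard := by
  have hsub : G.extNb (D ∪ S) ∩ U ⊆ G.extNb D ∩ U ∪ G.extNb S ∩ (U \ D) := by
    rintro v ⟨hv, hvU⟩
    rcases extNb_union_subset G D S hv with hvD | ⟨hvS, hvD⟩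
    · exact Or.inl ⟨hvD, hvU⟩
    · exact Or.inr ⟨hvS, hvU, hvD⟩
  have hle : ((G.extNb (D ∪ S) ∩ U).ncard : ℝ) ≤
      (G.extNb D ∩ U).ncard + (G.extNb S ∩ (U \ D)).ncard :=
    mod_cast (Set.ncard_le_ncard hsub).trans (Set.ncard_union_le _ _)
  rw [Set.ncard_union_eq hDS]
  push_cast
  linarith

variable {G}

lemma IsKExpander.lt_ncard {k α : ℝ} (h : G.IsKExpander k α) {U : Set V}
    (hU : ((G.extNb U).ncard : ℝ) < α * U.ncard) : k < U.ncard := by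
  by_contra! hUk
  exact (h U hUk).not_gt hU

lemma IsKExpander.mul_ncard_le_ncard_extNb [Finite V] {k α γ : ℝ} (h : G.IsKExpander k α)
    {D U : Set V} (hDU : D ⊆ U) (hDk : (D.ncard : ℝ) ≤ k)
    (hD : ((G.extNb D ∩ U).ncard : ℝ) ≤ γ * D.ncard) :
    (α - γ) * D.ncard ≤ (G.extNb U).ncard := by
  have hle : ((G.extNb D).ncard : ℝ) ≤ (G.extNb D ∩ U).ncard + (G.extNb U).ncard :=
    mod_cast (Set.ncard_le_ncard (extNb_subset_inter_union_extNb G hDU)).trans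
      (Set.ncard_union_le _ _)
  linarith [h D hDk]

lemma IsKExpander.exists_large_isExpander_induce [Finite V] {k α : ℝ} (h : G.IsKExpander k α)
    (hα : 0 < α) {U : Set V} (hUk : (U.ncard : ℝ) ≤ 3 * k / 2)
    (hU : ((G.extNb U).ncard : ℝ) < α / 6 * U.ncard) :
    ∃ V₀ ⊆ U, 2 * (U.ncard : ℝ) / 3 < V₀.ncard ∧
      ∀ [Fintype V₀], (G.induce V₀).IsExpander (α / 2) := by
  set P : Set (Set V) :=
    {D | D ⊆ U ∧ (D.ncard : ℝ) ≤ k ∧ ((G.extNb D ∩ U).ncard : ℝ) ≤ α / 2 * D.ncard}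
  have hsmall : ∀ D ∈ P, (D.ncard : ℝ) < U.ncard / 3 := by
    rintro D ⟨hDU, hDk, hD⟩
    nlinarith [h.mul_ncard_le_ncard_extNb hDU hDk hD]
  obtain ⟨D, hDP, hmax⟩ := Set.exists_max_image P Set.ncard (Set.toFinite P)
    ⟨∅, Set.empty_subset U, by simpa using (by linarith [U.ncard.cast_nonneg (α := ℝ)] : 0 ≤ k)⟩
  have hDsmall := hsmall D hDP
  obtain ⟨hDU, -, hD⟩ := hDP
  have hUD : ((U \ D).ncard : ℝ) = U.ncard - D.ncard := Set.cast_ncard_sdiff hDU (Set.toFinite U)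
  refine ⟨U \ D, Set.sdiff_subset, by linarith, fun {_} => ?_⟩
  refine isExpander_induce_of_forall_subset G fun S hS hShalf => ?_
  by_contra! hSbad
  have hSpos : 0 < S.ncard := Nat.pos_of_ne_zero fun h0 =>
    (Nat.cast_nonneg _).not_gt (by simpa [h0] using hSbad)
  have hDS : Disjoint D S := Set.disjoint_left.2 fun _ hvD hvS => (hS hvS).2 hvD
  have hcard : ((D ∪ S).ncard : ℝ) = D.ncard + S.ncard := by
    rw [Set.ncard_union_eq hDS]; push_cast; ring
  have hDSP : D ∪ S ∈ P := by
    refine ⟨Set.union_subset hDU (hS.trans Set.sdiff_subset), ?_,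
      ncard_extNb_union_inter_le G hDS hD hSbad.le⟩
    linarith
  have := hmax _ hDSP
  rw [Set.ncard_union_eq hDS] at this
  omega

end SimpleGraph

theorem stmt_1_general {V : Type*} [Fintype V] (G : SimpleGraph V) (α : ℝ) (hα : 0 < α)
    (k : ℕ) (h : G.IsKExpander k α) :
    G.IsKExpander (3 * k / 2) (α / 6) ∨
      ∃ V₀ : Set V, 2 * (k : ℝ) / 3 ≤ (V₀.ncard : ℝ) ∧
        (G.induce V₀).IsExpander (α / 2) := by
  refine or_iff_not_imp_left.2 fun hnot => ?_
  obtain ⟨U, hUk, hU⟩ : ∃ U : Set V, (U.ncard : ℝ) ≤ 3 * k / 2 ∧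
      ((G.extNb U).ncard : ℝ) < α / 6 * U.ncard := by
    simpa [SimpleGraph.IsKExpander] using hnot
  have hkU : (k : ℝ) < U.ncard :=
    h.lt_ncard (by nlinarith [(G.extNb U).ncard.cast_nonneg (α := ℝ)])
  obtain ⟨V₀, -, hV₀, hexp⟩ := h.exists_large_isExpander_induce hα hUk hU
  exact ⟨V₀, by linarith, hexp⟩

theorem stmt_1 {V : Type*} [Fintype V] (G : SimpleGraph V) (α : ℝ) (hα : 0 < α)
    (k : ℕ) (hk : 0 < k) (h : G.IsKExpander k α) :
    G.IsKExpander (3 * k / 2) (α / 6) ∨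
      ∃ V₀ : Set V, 2 * (k : ℝ) / 3 ≤ (V₀.ncard : ℝ) ∧
        (G.induce V₀).IsExpander (α / 2) :=
  stmt_1_general G α hα k h
end

section
/- Let 0 < α ≤ 1 and let k be a positive integer. Let G = (V,E) be a graph such that every vertex subset U ⊆ V with |U| = k satisfies |N_G(U)| ≥ αk. Then there is a vertex subset Z ⊂ V of size |Z| < k such that the induced subgraph G' = G[V∖Z] is an (αk/3, α/3)-expander. -/
open scoped Classical

/-!
Suppose no set `Z` of fewer than `k` vertices works. Starting from `W = ∅`, as long as `|W| < k`
the graph `G - W` is not an `(αk/3, α/3)`-expander, so some nonempty `U ⊆ V ∖ W` with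
`|U| ≤ αk/3` has fewer than `α|U|/3` external neighbours in `G - W`; adding `U` to `W` keeps
`|N_G(W)| ≤ α|W|/3`. The process stops with `k ≤ |W| < k + αk/3`, and any `k`-subset `W'` of `W`
then has `|N_G(W')| ≤ |N_G(W)| + |W ∖ W'| < αk`, contradicting the hypothesis.
-/

namespace SimpleGraph

variable {V : Type*} (G : SimpleGraph V)

lemma extNb_union_image_subset (W : Set V) (U : Set ↥Wᶜ) :
    G.extNb (W ∪ (↑) '' U) ⊆ G.extNb W ∪ (↑) '' ((G.induce Wᶜ).extNb U) := by
  rintro v ⟨hvWU, u, hu, huv⟩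
  have hvW : v ∉ W := fun hv => hvWU (Or.inl hv)
  rcases hu with huW | ⟨u, hu, rfl⟩
  · exact Or.inl ⟨hvW, u, huW, huv⟩
  · exact Or.inr ⟨⟨v, hvW⟩, ⟨fun hvU => hvWU (Or.inr ⟨_, hvU, rfl⟩), u, hu, huv⟩, rfl⟩

lemma ncard_extNb_union_image_le [Finite V] (W : Set V) (U : Set ↥Wᶜ) :
    (G.extNb (W ∪ (↑) '' U)).ncard ≤ (G.extNb W).ncard + ((G.induce Wᶜ).extNb U).ncard :=
  calc (G.extNb (W ∪ (↑) '' U)).ncard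
      ≤ (G.extNb W ∪ (↑) '' ((G.induce Wᶜ).extNb U)).ncard :=
        Set.ncard_le_ncard (G.extNb_union_image_subset W U)
    _ ≤ (G.extNb W).ncard + ((↑) '' ((G.induce Wᶜ).extNb U) : Set V).ncard :=
        Set.ncard_union_le _ _
    _ = (G.extNb W).ncard + ((G.induce Wᶜ).extNb U).ncard := by
        rw [Set.ncard_image_of_injective _ Subtype.val_injective]

lemma extNb_subset_union_sdiff {W' W : Set V} (h : W' ⊆ W) :
    G.extNb W' ⊆ G.extNb W ∪ (W \ W') := by
  rintro v ⟨hvW', u, hu, huv⟩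
  by_cases hvW : v ∈ W
  · exact Or.inr ⟨hvW, hvW'⟩
  · exact Or.inl ⟨hvW, u, h hu, huv⟩

lemma ncard_extNb_le_of_subset [Finite V] {W' W : Set V} (h : W' ⊆ W) :
    ((G.extNb W').ncard : ℝ) ≤ (G.extNb W).ncard + W.ncard - W'.ncard := by
  have hle : (G.extNb W').ncard ≤ (G.extNb W).ncard + (W \ W').ncard :=
    (Set.ncard_le_ncard (G.extNb_subset_union_sdiff h)).trans (Set.ncard_union_le _ _)
  have hsdiff : ((W \ W').ncard : ℝ) = W.ncard - W'.ncard := Set.cast_ncard_sdiff h W.toFinite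
  have hle' : ((G.extNb W').ncard : ℝ) ≤ (G.extNb W).ncard + (W \ W').ncard := by
    exact_mod_cast hle
  linarith

lemma exists_ncard_lt_of_not_isKExpander [Finite V] {c β : ℝ} {W : Set V}
    (hW : ((G.extNb W).ncard : ℝ) ≤ β * W.ncard) (hexp : ¬ (G.induce Wᶜ).IsKExpander c β) :
    ∃ W' : Set V, W.ncard < W'.ncard ∧ (W'.ncard : ℝ) ≤ W.ncard + c ∧
      ((G.extNb W').ncard : ℝ) ≤ β * W'.ncard := by
  simp only [IsKExpander, not_forall, not_le] at hexp
  obtain ⟨U, hUc, hUnb⟩ := hexp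
  have hU : ((↑) '' U : Set V).ncard = U.ncard :=
    Set.ncard_image_of_injective _ Subtype.val_injective
  have hdisj : Disjoint W ((↑) '' U) := by
    rw [Set.disjoint_right]
    rintro _ ⟨u, -, rfl⟩
    exact u.2
  have hUpos : 0 < U.ncard := by
    by_contra! h0
    simp only [Nat.le_zero.mp h0, CharP.cast_eq_zero, mul_zero] at hUnb
    exact (Nat.cast_nonneg _).not_gt hUnb
  have hnb : ((G.extNb (W ∪ (↑) '' U)).ncard : ℝ) ≤
      (G.extNb W).ncard + ((G.induce Wᶜ).extNb U).ncard := by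
    exact_mod_cast G.ncard_extNb_union_image_le W U
  refine ⟨W ∪ (↑) '' U, ?_, ?_, ?_⟩ <;> rw [Set.ncard_union_eq hdisj, hU]
  · omega
  · push_cast
    linarith
  · push_cast
    linarith

lemma exists_sparse_set_of_forall_not_isKExpander [Finite V] {c β : ℝ} (hc : 0 < c) (k : ℕ)
    (H : ∀ Z : Set V, Z.ncard < k → ¬ (G.induce Zᶜ).IsKExpander c β) :
    ∃ W : Set V, k ≤ W.ncard ∧ (W.ncard : ℝ) < k + c ∧
      ((G.extNb W).ncard : ℝ) ≤ β * W.ncard := by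
  suffices ∀ j : ℕ, ∃ W : Set V, min j k ≤ W.ncard ∧ (W.ncard : ℝ) < k + c ∧
      ((G.extNb W).ncard : ℝ) ≤ β * W.ncard by
    simpa using this k
  intro j
  induction j with
  | zero => exact ⟨∅, by simp, by rw [Set.ncard_empty, Nat.cast_zero]; positivity, by simp [extNb]⟩
  | succ j ih =>
    obtain ⟨W, hjW, hWc, hWnb⟩ := ih
    by_cases hkW : k ≤ W.ncard
    · exact ⟨W, by omega, hWc, hWnb⟩
    obtain ⟨W', hWW', hW'c, hW'nb⟩ :=
      G.exists_ncard_lt_of_not_isKExpander hWnb (H W (by omega))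
    have hWk : (W.ncard : ℝ) < k := by exact_mod_cast not_le.mp hkW
    exact ⟨W', by omega, by linarith, hW'nb⟩

end SimpleGraph

theorem stmt_2 {V : Type*} [Fintype V] (G : SimpleGraph V) (α : ℝ)
    (hα0 : 0 < α) (hα1 : α ≤ 1) (k : ℕ) (hk : 0 < k)
    (h : ∀ U : Set V, U.ncard = k → α * k ≤ ((G.extNb U).ncard : ℝ)) :
    ∃ Z : Set V, Z.ncard < k ∧
      (G.induce Zᶜ).IsKExpander (α * k / 3) (α / 3) := by
  by_contra! hcon
  have hkR : (0 : ℝ) < k := by exact_mod_cast hk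
  obtain ⟨W, hkW, hWc, hWnb⟩ :=
    G.exists_sparse_set_of_forall_not_isKExpander (by positivity) k hcon
  obtain ⟨W', hW'W, hW'k⟩ := Set.exists_subset_card_eq hkW
  have hW' := h W' hW'k
  have hnb := G.ncard_extNb_le_of_subset hW'W
  rw [hW'k] at hnb
  -- `αk ≤ α|W|/3 + |W| - k < 2αk/3 + α²k/9 < αk`
  nlinarith
end

section
/- For every 0 < c ≤ 1 and 0 < α ≤ 1 there exist constants c' > 0 and α' > 0 such that the following holds. Let G = (V,E) be a graph on n vertices with the property that every vertex subset U ⊆ V of size exactly ⌊cn⌋ satisfies |N_G(U)| ≥ α|U|. Then G contains an induced subgraph G' on at least c'·n vertices which is an α'-expander. -/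
open scoped Classical

set_option maxHeartbeats 8000000

namespace StmtAux

open Set

variable {V : Type} [Fintype V] (G : SimpleGraph V)

omit [Fintype V] in
lemma extNb_union_subset (A B : Set V) :
    G.extNb (A ∪ B) ⊆ G.extNb A ∪ G.extNb B := by
  rintro v ⟨hv, u, hu, hadj⟩
  rcases hu with hu | hu
  · exact Or.inl ⟨fun h => hv (Or.inl h), u, hu, hadj⟩
  · exact Or.inr ⟨fun h => hv (Or.inr h), u, hu, hadj⟩

omit [Fintype V] in
lemma extNb_subset_of_subset {X P : Set V} (h : X ⊆ P) :
    G.extNb X ⊆ G.extNb P ∪ (P \ X) := by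
  rintro v ⟨hv, u, hu, hadj⟩
  by_cases hvP : v ∈ P
  · exact Or.inr ⟨hvP, hv⟩
  · exact Or.inl ⟨hvP, u, h hu, hadj⟩

omit [Fintype V] in
lemma extNb_univ : G.extNb (Set.univ : Set V) = ∅ := by
  ext v; simp [SimpleGraph.extNb]

omit [Fintype V] in
lemma card_coe (P : Set V) [Fintype ↥P] : (Fintype.card ↥P) = P.ncard := by
  rw [← Nat.card_eq_fintype_card, Nat.card_coe_set_eq]

lemma ncard_le_card (s : Set V) : s.ncard ≤ Fintype.card V := by
  have h := Set.ncard_le_ncard (Set.subset_univ s) (Set.toFinite _)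
  rwa [Set.ncard_univ, Nat.card_eq_fintype_card] at h

omit [Fintype V] in
lemma ncard_cast_le {A B : Set V} (hB : B.Finite) (h : A ⊆ B) :
    ((A.ncard : ℝ)) ≤ (B.ncard : ℝ) :=
  Nat.cast_le.mpr (Set.ncard_le_ncard h hB)

lemma not_expander_exists (P : Set V) (α' : ℝ)
    (h : ¬ (G.induce P).IsExpander α') :
    ∃ U' : Set V, U' ⊆ P ∧ U'.Nonempty ∧ 2 * (U'.ncard : ℝ) ≤ (P.ncard : ℝ) ∧
      (((G.extNb U' ∩ P).ncard : ℝ)) < α' * U'.ncard := by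
  unfold SimpleGraph.IsExpander at h
  push_neg at h
  obtain ⟨U, hUle, hUgt⟩ := h
  have himg : (Subtype.val '' U).ncard = U.ncard :=
    Set.ncard_image_of_injective U Subtype.coe_injective
  have hkey : Subtype.val '' ((G.induce P).extNb U) = G.extNb (Subtype.val '' U) ∩ P := by
    ext v
    constructor
    · rintro ⟨w, ⟨hwU, u, huU, hadj⟩, rfl⟩
      refine ⟨⟨?_, ⟨u, ⟨u, huU, rfl⟩, ?_⟩⟩, w.2⟩
      · rintro ⟨w', hw', hval⟩
        exact hwU (by rwa [Subtype.coe_injective hval] at hw')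
      · exact hadj
    · rintro ⟨⟨hvU, u, ⟨u', hu', rfl⟩, hadj⟩, hvP⟩
      refine ⟨⟨v, hvP⟩, ⟨?_, u', hu', ?_⟩, rfl⟩
      · intro hmem
        exact hvU ⟨⟨v, hvP⟩, hmem, rfl⟩
      · exact hadj
  have hcard2 : ((G.extNb (Subtype.val '' U) ∩ P).ncard : ℝ)
      = (((G.induce P).extNb U).ncard : ℝ) := by
    rw [← hkey, Set.ncard_image_of_injective _ Subtype.coe_injective]
  refine ⟨Subtype.val '' U, ?_, ?_, ?_, ?_⟩
  · rintro v ⟨w, _, rfl⟩; exact w.2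
  · have hUne : U.Nonempty := by
      by_contra hne
      rw [Set.not_nonempty_iff_eq_empty] at hne
      subst hne
      simp only [Set.ncard_empty, Nat.cast_zero, mul_zero] at hUgt
      have h0 : (0:ℝ) ≤ (((G.induce P).extNb (∅ : Set ↥P)).ncard : ℝ) := Nat.cast_nonneg _
      linarith
    exact hUne.image _
  · rw [himg]
    have hc := card_coe P
    rw [hc] at hUle
    linarith
  · rw [himg, hcard2]
    exact hUgt


section Arith

private lemma arith_t1 {a p y z t : ℝ} (h0 : 0 < a) (h12 : a ≤ 1/12) (hp0 : 0 ≤ p)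
    (ht1 : t ≤ (1 - 3*a) * p) (hsum2 : p ≤ y + z + a*p/2) (hybig : (1-a)*p/2 ≤ y) :
    t - y ≤ (1 - 3*a) * z := by
  nlinarith [mul_le_mul_of_nonneg_left hsum2 (by linarith : (0:ℝ) ≤ 1 - 3*a),
    mul_le_mul_of_nonneg_left hybig (by linarith : (0:ℝ) ≤ 3*a),
    mul_nonneg h0.le hp0]

private lemma arith_t2 {a p y t m A : ℝ} (h0 : 0 < a) (h12 : a ≤ 1/12) (ht0 : 0 ≤ t)
    (htp : t ≤ p) (hybig : (1-a)*p/2 ≤ y) (ht2 : t ≤ m/4*(4/3*A)) :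
    t - y ≤ m/4*A := by
  nlinarith [mul_nonneg (by linarith : (0:ℝ) ≤ 1 - a) (by linarith : (0:ℝ) ≤ p - t),
    mul_nonneg (by linarith : (0:ℝ) ≤ 1/2 - a) ht0]

private lemma arith_take {a n y m j NX NY NX' : ℝ} (h0 : 0 ≤ a) (hy0 : 0 ≤ y)
    (h1 : NX ≤ NY + NX') (h2 : NY ≤ a*(n-y)) (h3 : NX' ≤ m + a*n*(5+j)) :
    NX ≤ m + a*n*(5+(j+1)) := by nlinarith [mul_nonneg h0 hy0]

end Arith

lemma rec_main (α' : ℝ) (m : ℕ) (hα'0 : 0 < α') (hα'12 : α' ≤ 1/12) :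
    ∀ N : ℕ, ∀ P : Set V, P.ncard ≤ N → ∀ j τ : ℕ,
      ((G.extNb P).ncard : ℝ) ≤ α' * ((Fintype.card V : ℝ) - P.ncard) →
      (τ : ℝ) ≤ (1 - 3 * α') * P.ncard →
      (τ : ℝ) ≤ ((m : ℝ) / 4) * (4 / 3) ^ j →
      (∃ W : Set V, (m : ℝ) ≤ (W.ncard : ℝ) ∧ (G.induce W).IsExpander α') ∨
      (∃ X : Set V, X ⊆ P ∧ X.ncard = τ ∧
        ((G.extNb X).ncard : ℝ) ≤ (m : ℝ) + α' * (Fintype.card V : ℝ) * (5 + j)) := by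
  intro N
  induction N using Nat.strong_induction_on with
  | _ N ih =>
  intro P hPN j τ hdP hτ1 hτ2
  have hn0 : (0:ℝ) ≤ (Fintype.card V : ℝ) := Nat.cast_nonneg _
  have hpn : ((P.ncard : ℝ)) ≤ (Fintype.card V : ℝ) := Nat.cast_le.mpr (ncard_le_card P)
  have hp0 : (0:ℝ) ≤ (P.ncard : ℝ) := Nat.cast_nonneg _
  have hτ0 : (0:ℝ) ≤ (τ : ℝ) := Nat.cast_nonneg _
  by_cases hPm : P.ncard < m
  · -- base case: the piece is smaller than m, take any τ-subset
    right
    have hτP : τ ≤ P.ncard := by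
      have : (τ:ℝ) ≤ (P.ncard:ℝ) := by nlinarith
      exact_mod_cast this
    obtain ⟨X, hXP, hXcard⟩ := Set.exists_subset_card_eq hτP
    refine ⟨X, hXP, hXcard, ?_⟩
    have h1 : ((G.extNb X).ncard : ℝ) ≤ ((G.extNb P ∪ (P \ X)).ncard : ℝ) :=
      ncard_cast_le (Set.Finite.union (Set.toFinite _) (Set.toFinite _))
        (extNb_subset_of_subset G hXP)
    have h2 : ((G.extNb P ∪ (P \ X)).ncard : ℝ)
        ≤ ((G.extNb P).ncard : ℝ) + ((P \ X).ncard : ℝ) := by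
      exact_mod_cast Set.ncard_union_le _ _
    have h3 : ((P \ X).ncard : ℝ) ≤ (P.ncard : ℝ) :=
      ncard_cast_le (Set.toFinite _) Set.diff_subset
    have h4 : ((P.ncard : ℝ)) ≤ (m : ℝ) := by exact_mod_cast hPm.le
    have h5 : (0:ℝ) ≤ (j:ℝ) := Nat.cast_nonneg _
    have hA : α' * ((Fintype.card V : ℝ) - P.ncard) ≤ α' * (Fintype.card V : ℝ) :=
      by nlinarith [mul_nonneg hα'0.le hp0]
    have hB : α' * (Fintype.card V : ℝ) ≤ α' * (Fintype.card V : ℝ) * (5 + (j:ℝ)) := by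
      nlinarith [mul_nonneg (mul_nonneg hα'0.le hn0) h5, mul_nonneg hα'0.le hn0]
    linarith
  · by_cases hexp : (G.induce P).IsExpander α'
    · exact Or.inl ⟨P, by exact_mod_cast (not_lt.1 hPm), hexp⟩
    · obtain ⟨U', hU'P, hU'ne, hU'half, hS'lt⟩ := not_expander_exists G P α' hexp
      set S' : Set V := G.extNb U' ∩ P with hS'def
      set B : Set V := P \ (U' ∪ S') with hBdef
      have hS'P : S' ⊆ P := Set.inter_subset_right
      have hBP : B ⊆ P := Set.diff_subset
      have hdisj : Disjoint U' B := by
        rw [Set.disjoint_right]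
        rintro v hvB hvU
        exact hvB.2 (Or.inl hvU)
      have ha1 : (1:ℝ) ≤ (U'.ncard : ℝ) := by
        have := (Set.ncard_pos (Set.toFinite U')).mpr hU'ne
        exact_mod_cast this
      have hmp : (m : ℝ) ≤ (P.ncard : ℝ) := by exact_mod_cast (not_lt.1 hPm)
      -- |B| ≤ p - a
      have hB_le : (B.ncard : ℝ) ≤ (P.ncard : ℝ) - (U'.ncard : ℝ) := by
        have hsub : B ⊆ P \ U' := Set.diff_subset_diff_right Set.subset_union_left
        have h1 : (B.ncard : ℝ) ≤ ((P \ U').ncard : ℝ) := ncard_cast_le (Set.toFinite _) hsub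
        have h2 : (P \ U').ncard = P.ncard - U'.ncard := Set.ncard_diff hU'P (Set.toFinite _)
        have h3 : U'.ncard ≤ P.ncard := Set.ncard_le_ncard hU'P (Set.toFinite _)
        rw [h2] at h1
        rw [Nat.cast_sub h3] at h1
        exact h1
      -- |B| ≥ p - a - s
      have hB_ge : (P.ncard : ℝ) - (U'.ncard : ℝ) - (S'.ncard : ℝ) ≤ (B.ncard : ℝ) := by
        have hUS : U' ∪ S' ⊆ P := Set.union_subset hU'P hS'P
        have h2 : (P \ (U' ∪ S')).ncard = P.ncard - (U' ∪ S').ncard :=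
          Set.ncard_diff hUS (Set.toFinite _)
        have h3 : (U' ∪ S').ncard ≤ U'.ncard + S'.ncard := Set.ncard_union_le _ _
        have h4 : (U' ∪ S').ncard ≤ P.ncard := Set.ncard_le_ncard hUS (Set.toFinite _)
        have : (B.ncard : ℝ) = (P.ncard : ℝ) - ((U' ∪ S').ncard : ℝ) := by
          rw [hBdef, h2, Nat.cast_sub h4]
        rw [this]
        have : ((U' ∪ S').ncard : ℝ) ≤ (U'.ncard : ℝ) + (S'.ncard : ℝ) := by exact_mod_cast h3
        linarith
      have hUlt : U'.ncard < P.ncard := by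
        have : (U'.ncard : ℝ) < (P.ncard : ℝ) := by linarith
        exact_mod_cast this
      have hBlt : B.ncard < P.ncard := by
        have : (B.ncard : ℝ) < (P.ncard : ℝ) := by linarith
        exact_mod_cast this
      have hs0 : (0:ℝ) ≤ (S'.ncard : ℝ) := Nat.cast_nonneg _
      have hb0 : (0:ℝ) ≤ (B.ncard : ℝ) := Nat.cast_nonneg _
      -- extNb bounds for the children
      have hNU : ((G.extNb U').ncard : ℝ) ≤ (S'.ncard : ℝ) + α' * ((Fintype.card V : ℝ) - P.ncard) := by
        have hsub : G.extNb U' ⊆ S' ∪ G.extNb P := by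
          rintro v ⟨hvU, u, hu, hadj⟩
          by_cases hvP : v ∈ P
          · exact Or.inl ⟨⟨hvU, u, hu, hadj⟩, hvP⟩
          · exact Or.inr ⟨hvP, u, hU'P hu, hadj⟩
        have h1 : ((G.extNb U').ncard : ℝ) ≤ ((S' ∪ G.extNb P).ncard : ℝ) :=
          ncard_cast_le (Set.toFinite _) hsub
        have h2 : ((S' ∪ G.extNb P).ncard : ℝ) ≤ (S'.ncard : ℝ) + ((G.extNb P).ncard : ℝ) := by
          exact_mod_cast Set.ncard_union_le _ _
        linarith
      have hNB : ((G.extNb B).ncard : ℝ) ≤ (S'.ncard : ℝ) + α' * ((Fintype.card V : ℝ) - P.ncard) := by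
        have hsub : G.extNb B ⊆ S' ∪ G.extNb P := by
          rintro v ⟨hvB, u, hu, hadj⟩
          by_cases hvP : v ∈ P
          · have hv_in : v ∈ U' ∪ S' := by
              by_contra hcon
              exact hvB ⟨hvP, hcon⟩
            rcases hv_in with hvU | hvS
            · exfalso
              have huS : u ∈ S' := by
                refine ⟨⟨fun huU => (hu.2 (Or.inl huU)), v, hvU, hadj.symm⟩, hu.1⟩
              exact hu.2 (Or.inr huS)
            · exact Or.inl hvS
          · exact Or.inr ⟨hvP, u, hBP hu, hadj⟩
        have h1 : ((G.extNb B).ncard : ℝ) ≤ ((S' ∪ G.extNb P).ncard : ℝ) :=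
          ncard_cast_le (Set.toFinite _) hsub
        have h2 : ((S' ∪ G.extNb P).ncard : ℝ) ≤ (S'.ncard : ℝ) + ((G.extNb P).ncard : ℝ) := by
          exact_mod_cast Set.ncard_union_le _ _
        linarith
      have invU : ((G.extNb U').ncard : ℝ) ≤ α' * ((Fintype.card V : ℝ) - U'.ncard) := by
        nlinarith [mul_nonneg hα'0.le (by linarith : (0:ℝ) ≤ (P.ncard:ℝ) - 2*(U'.ncard:ℝ))]
      have invB : ((G.extNb B).ncard : ℝ) ≤ α' * ((Fintype.card V : ℝ) - B.ncard) := by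
        nlinarith [mul_nonneg hα'0.le (by linarith : (0:ℝ) ≤ (P.ncard:ℝ) - (U'.ncard:ℝ) - (B.ncard:ℝ))]
      by_cases hcase1 : (τ : ℝ) ≤ (1 - 3 * α') * (U'.ncard : ℝ)
      · rcases ih U'.ncard (lt_of_lt_of_le hUlt hPN) U' le_rfl j τ invU hcase1 hτ2 with
          hL | ⟨X, hXU, hXc, hXb⟩
        · exact Or.inl hL
        · exact Or.inr ⟨X, hXU.trans hU'P, hXc, hXb⟩
      · by_cases hcase2 : (τ : ℝ) ≤ (1 - 3 * α') * (B.ncard : ℝ)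
        · rcases ih B.ncard (lt_of_lt_of_le hBlt hPN) B le_rfl j τ invB hcase2 hτ2 with
            hL | ⟨X, hXB, hXc, hXb⟩
          · exact Or.inl hL
          · exact Or.inr ⟨X, hXB.trans hBP, hXc, hXb⟩
        · push_neg at hcase1 hcase2
          -- sum bound : p ≤ a + b + α' p / 2
          have hsum : (P.ncard : ℝ) ≤ (U'.ncard : ℝ) + (B.ncard : ℝ) + α' * (P.ncard : ℝ) / 2 := by
            nlinarith [mul_nonneg hα'0.le (by linarith : (0:ℝ) ≤ (P.ncard:ℝ) - 2*(U'.ncard:ℝ))]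
          have main3 : ∀ Y Z : Set V, Y ⊆ P → Z ⊆ P → Disjoint Y Z →
              Z.ncard < P.ncard →
              ((G.extNb Y).ncard : ℝ) ≤ α' * ((Fintype.card V : ℝ) - Y.ncard) →
              ((G.extNb Z).ncard : ℝ) ≤ α' * ((Fintype.card V : ℝ) - Z.ncard) →
              (Z.ncard : ℝ) ≤ (Y.ncard : ℝ) →
              (P.ncard : ℝ) ≤ (Y.ncard : ℝ) + (Z.ncard : ℝ) + α' * (P.ncard : ℝ) / 2 →
              (1 - 3 * α') * (Y.ncard : ℝ) < τ →
              (∃ W : Set V, (m : ℝ) ≤ (W.ncard : ℝ) ∧ (G.induce W).IsExpander α') ∨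
              (∃ X : Set V, X ⊆ P ∧ X.ncard = τ ∧
                ((G.extNb X).ncard : ℝ) ≤ (m : ℝ) + α' * (Fintype.card V : ℝ) * (5 + j)) := by
            intro Y Z hYP hZP hYZ hZlt invY invZ hzy hsum2 hτY
            have hy_n : ((Y.ncard : ℝ)) ≤ (Fintype.card V : ℝ) := Nat.cast_le.mpr (ncard_le_card Y)
            have hy0 : (0:ℝ) ≤ (Y.ncard : ℝ) := Nat.cast_nonneg _
            have hz0 : (0:ℝ) ≤ (Z.ncard : ℝ) := Nat.cast_nonneg _
            have hybig : (1 - α') * (P.ncard : ℝ) / 2 ≤ (Y.ncard : ℝ) := by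
              nlinarith [mul_nonneg hα'0.le hp0]
            by_cases hτY2 : (τ : ℝ) ≤ (Y.ncard : ℝ)
            · -- partial take from Y
              right
              have hτYn : τ ≤ Y.ncard := by exact_mod_cast hτY2
              obtain ⟨X, hXY, hXcard⟩ := Set.exists_subset_card_eq hτYn
              refine ⟨X, hXY.trans hYP, hXcard, ?_⟩
              have h1 : ((G.extNb X).ncard : ℝ) ≤ ((G.extNb Y ∪ (Y \ X)).ncard : ℝ) :=
                ncard_cast_le (Set.Finite.union (Set.toFinite _) (Set.toFinite _))
                  (extNb_subset_of_subset G hXY)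
              have h2 : ((G.extNb Y ∪ (Y \ X)).ncard : ℝ)
                  ≤ ((G.extNb Y).ncard : ℝ) + ((Y \ X).ncard : ℝ) := by
                exact_mod_cast Set.ncard_union_le _ _
              have h3 : ((Y \ X).ncard : ℝ) = (Y.ncard : ℝ) - (τ : ℝ) := by
                rw [Set.ncard_diff hXY (Set.toFinite _), hXcard, Nat.cast_sub hτYn]
              have h5 : (0:ℝ) ≤ (j:ℝ) := Nat.cast_nonneg _
              have hm0 : (0:ℝ) ≤ (m:ℝ) := Nat.cast_nonneg _
              -- |Y| - τ < 3 α' |Y| ≤ 3 α' n ; extNb Y ≤ α' n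
              nlinarith [mul_nonneg hα'0.le (sub_nonneg.mpr hy_n),
                mul_nonneg (mul_nonneg hα'0.le hn0) h5, mul_nonneg hα'0.le hy0]
            · -- take all of Y, recurse into Z
              push_neg at hτY2
              have hm0 : (0:ℝ) ≤ (m:ℝ) := Nat.cast_nonneg _
              have hτbig : (m : ℝ) / 4 < (τ : ℝ) := by
                nlinarith [mul_nonneg hα'0.le (sub_nonneg.mpr hmp)]
              obtain ⟨j', rfl⟩ : ∃ j', j = j' + 1 := by
                cases j with
                | zero =>
                  exfalso
                  simp only [pow_zero, mul_one, Nat.cast_zero] at hτ2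
                  linarith
                | succ j' => exact ⟨j', rfl⟩
              have hYτn : Y.ncard < τ := by exact_mod_cast hτY2
              set τ' : ℕ := τ - Y.ncard with hτ'def
              have hτ'cast : (τ' : ℝ) = (τ : ℝ) - (Y.ncard : ℝ) := by
                rw [hτ'def, Nat.cast_sub hYτn.le]
              have hpow : ((4:ℝ)/3) ^ (j' + 1) = (4/3) * (4/3) ^ j' := by
                rw [pow_succ]; ring
              have hpowpos : (0:ℝ) < ((4:ℝ)/3) ^ j' := by positivity
              have t1 : (τ' : ℝ) ≤ (1 - 3 * α') * (Z.ncard : ℝ) := by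
                rw [hτ'cast]
                exact arith_t1 hα'0 hα'12 hp0 hτ1 hsum2 hybig
              have t2 : (τ' : ℝ) ≤ ((m : ℝ) / 4) * (4 / 3) ^ j' := by
                rw [hτ'cast]
                rw [hpow] at hτ2
                have hτp : (τ : ℝ) ≤ (P.ncard : ℝ) := by
                  nlinarith [mul_nonneg hα'0.le hp0]
                exact arith_t2 hα'0 hα'12 hτ0 hτp hybig hτ2
              rcases ih Z.ncard (lt_of_lt_of_le hZlt hPN) Z le_rfl j' τ' invZ t1 t2 with
                hL | ⟨X', hX'Z, hX'c, hX'b⟩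
              · exact Or.inl hL
              · right
                refine ⟨Y ∪ X', Set.union_subset hYP (hX'Z.trans hZP), ?_, ?_⟩
                · have hdisj2 : Disjoint Y X' := hYZ.mono_right hX'Z
                  rw [Set.ncard_union_eq hdisj2 (Set.toFinite _) (Set.toFinite _), hX'c]
                  omega
                · have h1 : ((G.extNb (Y ∪ X')).ncard : ℝ)
                      ≤ ((G.extNb Y ∪ G.extNb X').ncard : ℝ) :=
                    ncard_cast_le (Set.Finite.union (Set.toFinite _) (Set.toFinite _))
                      (extNb_union_subset G Y X')
                  have h2 : ((G.extNb Y ∪ G.extNb X').ncard : ℝ)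
                      ≤ ((G.extNb Y).ncard : ℝ) + ((G.extNb X').ncard : ℝ) := by
                    exact_mod_cast Set.ncard_union_le _ _
                  have hcast : ((j' + 1 : ℕ) : ℝ) = (j' : ℝ) + 1 := by push_cast; ring
                  rw [hcast]
                  exact arith_take hα'0.le hy0 (le_trans h1 h2) invY hX'b
          rcases le_total (B.ncard : ℝ) (U'.ncard : ℝ) with hab | hab
          · exact main3 U' B hU'P hBP hdisj hBlt invU invB hab hsum hcase1
          · refine main3 B U' hBP hU'P hdisj.symm hUlt invB invU hab ?_ hcase2
            linarith

lemma expander_of_card_le_one {W : Type} [Fintype W] (H : SimpleGraph W) (a : ℝ)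
    (h : Fintype.card W ≤ 1) : H.IsExpander a := by
  intro U hU
  have h0 : U.ncard = 0 := by
    by_contra hc
    have h1 : (1:ℝ) ≤ (U.ncard:ℝ) := by
      exact_mod_cast Nat.one_le_iff_ne_zero.mpr hc
    have h2 : (Fintype.card W : ℝ) ≤ 1 := by exact_mod_cast h
    linarith
  rw [h0]
  simp

end StmtAux

theorem stmt_3 (c α : ℝ) (hc0 : 0 < c) (hc1 : c ≤ 1) (hα0 : 0 < α) (hα1 : α ≤ 1) :
    ∃ c' α' : ℝ, 0 < c' ∧ 0 < α' ∧
      ∀ (V : Type) (_ : Fintype V) (G : SimpleGraph V),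
        (∀ U : Set V, U.ncard = ⌊c * (Fintype.card V : ℝ)⌋₊ →
          α * U.ncard ≤ ((G.extNb U).ncard : ℝ)) →
        ∃ W : Set V, c' * (Fintype.card V : ℝ) ≤ (W.ncard : ℝ) ∧
          (G.induce W).IsExpander α' := by
  rcases eq_or_lt_of_le hc1 with hc1e | hc1l
  · -- c = 1 : the hypothesis forces the graph to be empty
    refine ⟨1, 1, one_pos, one_pos, ?_⟩
    intro V _ G hG
    have hVempty : Fintype.card V = 0 := by
      by_contra hne
      have hcard : (Set.univ : Set V).ncard = ⌊c * (Fintype.card V : ℝ)⌋₊ := by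
        rw [hc1e, one_mul, Nat.floor_natCast, Set.ncard_univ, Nat.card_eq_fintype_card]
      have h := hG Set.univ hcard
      rw [StmtAux.extNb_univ] at h
      simp only [Set.ncard_univ, Nat.card_eq_fintype_card, Set.ncard_empty,
        Nat.cast_zero] at h
      have hpos : (0:ℝ) < (Fintype.card V : ℝ) := by
        exact_mod_cast Nat.pos_of_ne_zero hne
      nlinarith
    refine ⟨∅, ?_, ?_⟩
    · simp [hVempty]
    · intro U hU
      rw [StmtAux.card_coe] at hU
      have h0 : U.ncard = 0 := by
        by_contra hcon
        have h1 : (1:ℝ) ≤ (U.ncard:ℝ) := by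
          exact_mod_cast Nat.one_le_iff_ne_zero.mpr hcon
        have h2 : (((∅ : Set V)).ncard : ℝ) ≤ 1 := by
          norm_num
        linarith
      rw [h0]
      simp
  · -- c < 1
    obtain ⟨j₀, hj₀⟩ := pow_unbounded_of_one_lt (32 / α) (by norm_num : (1:ℝ) < 4/3)
    have hj₀0 : (0:ℝ) ≤ (j₀:ℝ) := Nat.cast_nonneg _
    set α' : ℝ := min (α * c / (8 * (5 + (j₀:ℝ)))) (min ((1 - c)/3) (1/12)) with hα'def
    have hα'0 : 0 < α' := by
      refine lt_min (by positivity) (lt_min (by linarith) (by norm_num))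
    have hα'12 : α' ≤ 1/12 := (min_le_right _ _).trans (min_le_right _ _)
    have hα'c : α' ≤ (1-c)/3 := (min_le_right _ _).trans (min_le_left _ _)
    have hα'm : α' ≤ α * c / (8 * (5 + (j₀:ℝ))) := min_le_left _ _
    refine ⟨α * c / 16, α', by positivity, hα'0, ?_⟩
    intro V _ G hG
    by_cases hn0 : Fintype.card V = 0
    · refine ⟨∅, ?_, ?_⟩
      · simp [hn0]
      · intro U hU
        rw [StmtAux.card_coe] at hU
        have h0 : U.ncard = 0 := by
          by_contra hcon
          have h1 : (1:ℝ) ≤ (U.ncard:ℝ) := by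
            exact_mod_cast Nat.one_le_iff_ne_zero.mpr hcon
          have h2 : (((∅ : Set V)).ncard : ℝ) ≤ 1 := by
            norm_num
          linarith
        rw [h0]
        simp
    · set k := ⌊c * ((Fintype.card V : ℕ) : ℝ)⌋₊ with hkdef
      have hk_le : (k:ℝ) ≤ c * (Fintype.card V : ℝ) := Nat.floor_le (by positivity)
      have hk1 : c * ((Fintype.card V : ℕ) : ℝ) < (k:ℝ) + 1 := Nat.lt_floor_add_one _
      have hcard0 : (0:ℝ) ≤ (Fintype.card V : ℝ) := Nat.cast_nonneg _
      by_cases hsmall : α * (k:ℝ) < 2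
      · -- tiny graph : a single vertex does the job
        have hn1 : 0 < Fintype.card V := Nat.pos_of_ne_zero hn0
        obtain ⟨v⟩ : Nonempty V := Fintype.card_pos_iff.mp hn1
        refine ⟨{v}, ?_, ?_⟩
        swap
        · intro U hU
          rw [StmtAux.card_coe] at hU
          have h0 : U.ncard = 0 := by
            by_contra hcon
            have h1 : (1:ℝ) ≤ (U.ncard:ℝ) := by
              exact_mod_cast Nat.one_le_iff_ne_zero.mpr hcon
            have h2 : ((({v} : Set V)).ncard : ℝ) ≤ 1 := by
              norm_num
            linarith
          rw [h0]
          simp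
        rw [Set.ncard_singleton]
        have hk0 : (0:ℝ) ≤ (k:ℝ) := Nat.cast_nonneg _
        -- α * c * n < α * (k+1) ≤ 2 + 1 = 3, hence (αc/16) n < 3/16 ≤ 1
        have h2 : α * (c * (Fintype.card V : ℝ)) < 3 := by nlinarith
        have : α * c / 16 * (Fintype.card V : ℝ) < 3/16 := by nlinarith
        push_cast
        linarith
      · push_neg at hsmall
        set m := ⌈α * (k:ℝ) / 8⌉₊ with hmdef
        have hm_ge : α * (k:ℝ) / 8 ≤ (m:ℝ) := Nat.le_ceil _
        have hm_le : (m:ℝ) < α * (k:ℝ) / 8 + 1 := Nat.ceil_lt_add_one (by positivity)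
        have hk2 : (2:ℝ) ≤ (k:ℝ) := by nlinarith
        have hcn2k : c * (Fintype.card V : ℝ) ≤ 2 * (k:ℝ) := by push_cast at hk1 ⊢; nlinarith
        have hucard : ((Set.univ : Set V).ncard : ℝ) = (Fintype.card V : ℝ) := by
          rw [Set.ncard_univ, Nat.card_eq_fintype_card]
        have inv1 : ((G.extNb (Set.univ : Set V)).ncard : ℝ)
            ≤ α' * ((Fintype.card V : ℝ) - ((Set.univ : Set V).ncard : ℝ)) := by
          rw [StmtAux.extNb_univ, hucard]
          simp
        have inv2 : ((k:ℕ):ℝ) ≤ (1 - 3*α') * ((Set.univ : Set V).ncard : ℝ) := by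
          rw [hucard]
          nlinarith [mul_le_mul_of_nonneg_right (show c ≤ 1 - 3*α' by linarith) hcard0]
        have inv3 : ((k:ℕ):ℝ) ≤ ((m:ℝ)/4) * (4/3)^j₀ := by
          have hp : (0:ℝ) < (4/3:ℝ)^j₀ := by positivity
          have h1 : (k:ℝ) = (α*(k:ℝ)/32) * (32/α) := by field_simp
          have h2 : (α*(k:ℝ)/32) * (32/α) ≤ (α*(k:ℝ)/32) * (4/3)^j₀ :=
            mul_le_mul_of_nonneg_left hj₀.le (by positivity)
          have h3 : (α*(k:ℝ)/32) * (4/3:ℝ)^j₀ ≤ ((m:ℝ)/4) * (4/3)^j₀ := by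
            apply mul_le_mul_of_nonneg_right _ hp.le
            linarith
          rw [h1]
          exact h2.trans h3
        have huniv : (Set.univ : Set V).ncard ≤ Fintype.card V :=
          StmtAux.ncard_le_card _
        rcases StmtAux.rec_main G α' m hα'0 hα'12 (Fintype.card V) Set.univ huniv j₀ k
            inv1 inv2 inv3 with ⟨W, hW1, hW2⟩ | ⟨X, _, hXc, hXb⟩
        · refine ⟨W, ?_, hW2⟩
          have hstep : α * c / 16 * (Fintype.card V : ℝ) ≤ (m:ℝ) := by nlinarith
          linarith
        · exfalso
          have hxk := hG X hXc
          rw [hXc] at hxk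
          -- α' n (5 + j₀) ≤ α c n / 8 ≤ α k / 4
          have h5 : (0:ℝ) < 5 + (j₀:ℝ) := by positivity
          have hb1 : α' * (Fintype.card V : ℝ) * (5 + (j₀:ℝ))
              ≤ α * c * (Fintype.card V : ℝ) / 8 := by
            have hmul := mul_le_mul_of_nonneg_right hα'm
              (by positivity : (0:ℝ) ≤ (Fintype.card V : ℝ) * (5 + (j₀:ℝ)))
            calc α' * (Fintype.card V : ℝ) * (5 + (j₀:ℝ))
                = α' * ((Fintype.card V : ℝ) * (5 + (j₀:ℝ))) := by ring
              _ ≤ α * c / (8 * (5 + (j₀:ℝ))) * ((Fintype.card V : ℝ) * (5 + (j₀:ℝ))) := hmul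
              _ = α * c * (Fintype.card V : ℝ) / 8 := by field_simp
          have hb2 : α * c * (Fintype.card V : ℝ) / 8 ≤ α * (k:ℝ) / 4 := by nlinarith
          linarith
end

section
/- Let G be a d-regular graph on n vertices (d ≥ 1) with adjacency matrix A, and let λ be a real number such that xᵀAx ≤ λ·‖x‖² for every vector x ∈ ℝⁿ whose coordinates sum to 0 (i.e., λ is an upper bound on the second largest adjacency eigenvalue of G). Then G is an α-expander with α = (d−λ)/(2d). -/
open scoped Classical

/-! Test the spectral bound on `x = n • 1_U - |U| • 1`, which sums to zero. In a `d`-regular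
graph `xᵀ A x = d ‖x‖² - xᵀ L x` with `L` the Laplacian; here `xᵀ L x = n² e(U, Uᶜ)` and
`‖x‖² = n |U| (n - |U|)`, so `(d - λ) |U| (n - |U|) ≤ n e(U, Uᶜ)`. Every vertex of `N(U)` is
the endpoint of at most `d` of the edges leaving `U`, so `e(U, Uᶜ) ≤ d |N(U)|`, and
`n - |U| ≥ n / 2` finishes the proof. -/

open Finset Matrix

namespace SimpleGraph

variable {V : Type*} (G : SimpleGraph V) [DecidableRel G.Adj]

theorem card_interedges_comm (s t : Finset V) : #(G.interedges s t) = #(G.interedges t s) :=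
  have := G.symm
  Rel.card_interedges_comm s t

variable [Fintype V] [DecidableEq V]

section Laplacian

variable {R : Type*} [Field R] [CharZero R]

theorem dotProduct_mulVec_lapMatrix_affine (c b : R) (x : V → R) :
    (fun v ↦ c * x v + b) ⬝ᵥ (G.lapMatrix R *ᵥ fun v ↦ c * x v + b) =
      c ^ 2 * (x ⬝ᵥ (G.lapMatrix R *ᵥ x)) := by
  simp only [← toLinearMap₂'_apply', lapMatrix_toLinearMap₂', mul_div_assoc', mul_sum]
  congr 1
  refine sum_congr rfl fun i _ ↦ sum_congr rfl fun j _ ↦ ?_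
  split_ifs <;> ring

theorem dotProduct_mulVec_lapMatrix_indicator (s : Finset V) :
    (fun v ↦ if v ∈ s then (1 : R) else 0) ⬝ᵥ
        (G.lapMatrix R *ᵥ fun v ↦ if v ∈ s then 1 else 0) = #(G.interedges s sᶜ) := by
  have hsplit : ∀ i j, (if G.Adj i j then
      ((if i ∈ s then (1 : R) else 0) - if j ∈ s then 1 else 0) ^ 2 else 0) =
      (if (i, j) ∈ G.interedges s sᶜ then 1 else 0) +
        if (i, j) ∈ G.interedges sᶜ s then 1 else 0 := by
    intro i j
    simp only [mk_mem_interedges_iff, mem_compl]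
    by_cases hij : G.Adj i j <;> by_cases hi : i ∈ s <;> by_cases hj : j ∈ s <;> simp [*]
  rw [← toLinearMap₂'_apply', lapMatrix_toLinearMap₂']
  simp only [hsplit, sum_add_distrib,
    ← Fintype.sum_prod_type' (fun i j ↦ if (i, j) ∈ _ then (1 : R) else 0)]
  simp only [Prod.mk.eta, sum_boole, filter_mem_eq_inter, univ_inter]
  rw [G.card_interedges_comm sᶜ s]
  ring

end Laplacian

variable {G} in
theorem IsRegularOfDegree.dotProduct_mulVec_adjMatrix {R : Type*} [CommRing R] {d : ℕ}
    (hreg : G.IsRegularOfDegree d) (x : V → R) :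
    x ⬝ᵥ (G.adjMatrix R *ᵥ x) = d * ∑ i, x i ^ 2 - x ⬝ᵥ (G.lapMatrix R *ᵥ x) := by
  rw [lapMatrix, sub_mulVec, dotProduct_sub, dotProduct_mulVec_degMatrix]
  simp only [hreg.degree_eq, mul_sum, mul_assoc, sq]
  ring

theorem card_interedges_compl_le {k : ℕ} (hk : ∀ v, G.degree v ≤ k) (s : Finset V) :
    #(G.interedges s sᶜ) ≤ k * (G.extNb s).ncard := by
  rw [Set.ncard_eq_toFinset_card']
  refine card_le_mul_card_image_of_maps_to (f := Prod.snd) ?_ k fun j _ ↦ ?_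
  · rintro ⟨i, j⟩ hij
    rw [mk_mem_interedges_iff, mem_compl] at hij
    rw [Set.mem_toFinset]
    exact ⟨hij.2.1, i, hij.1, hij.2.2⟩
  · refine (card_le_card_of_injOn Prod.fst (t := G.neighborFinset j) ?_ ?_).trans (hk j)
    · rintro ⟨i, j'⟩ h
      obtain ⟨hij, rfl⟩ := mem_filter.mp (mem_coe.mp h)
      exact (mem_neighborFinset _ _ _).mpr ((mk_mem_interedges_iff _).mp hij).2.2.symm
    · rintro ⟨i, j₁⟩ h₁ ⟨i', j₂⟩ h₂ (rfl : i = i')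
      obtain ⟨-, rfl⟩ := mem_filter.mp (mem_coe.mp h₁)
      obtain ⟨-, rfl⟩ := mem_filter.mp (mem_coe.mp h₂)
      rfl

variable {G} in
theorem IsRegularOfDegree.le_card_mul_card_interedges_compl {d : ℕ} (hreg : G.IsRegularOfDegree d)
    {lam : ℝ} (hlam : ∀ x : V → ℝ, ∑ i, x i = 0 → x ⬝ᵥ (G.adjMatrix ℝ *ᵥ x) ≤ lam * ∑ i, x i ^ 2)
    (s : Finset V) :
    (d - lam) * #s * (Fintype.card V - #s) ≤ Fintype.card V * #(G.interedges s sᶜ) := by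
  set n : ℝ := (Fintype.card V : ℝ)
  set χ : V → ℝ := fun v ↦ if v ∈ s then 1 else 0
  have hχ_sum : ∑ v, χ v = #s := by simp [χ]
  have hχ_sq : ∀ v, χ v ^ 2 = χ v := fun v ↦ by by_cases hv : v ∈ s <;> simp [χ, hv]
  rcases eq_or_ne n 0 with hn | hn
  · have : IsEmpty V := Fintype.card_eq_zero_iff.mp (Nat.cast_eq_zero.mp hn)
    simp [s.eq_empty_of_isEmpty]
  set x : V → ℝ := fun v ↦ n * χ v + -#s
  have hx_sum : ∑ v, x v = 0 := by
    simp [x, sum_add_distrib, ← mul_sum, hχ_sum, n]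
  have hx_sq : ∑ v, x v ^ 2 = n * #s * (n - #s) := by
    simp only [x, add_sq, mul_pow, hχ_sq, sum_add_distrib, ← sum_mul, ← mul_sum, hχ_sum]
    simp only [mul_neg, even_two, Even.neg_pow, sum_const, card_univ, nsmul_eq_mul, n]
    ring
  have hx_lap : x ⬝ᵥ (G.lapMatrix ℝ *ᵥ x) = n ^ 2 * #(G.interedges s sᶜ) := by
    rw [G.dotProduct_mulVec_lapMatrix_affine, G.dotProduct_mulVec_lapMatrix_indicator]
  have key := hlam x hx_sum
  rw [hreg.dotProduct_mulVec_adjMatrix, hx_lap, hx_sq] at key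
  have hn_pos : 0 < n := (Nat.cast_nonneg _).lt_of_ne' hn
  refine le_of_mul_le_mul_left ?_ hn_pos
  linarith

end SimpleGraph

open Matrix in
theorem stmt_6 {V : Type*} [Fintype V] [DecidableEq V] (G : SimpleGraph V)
    [DecidableRel G.Adj] (d : ℕ) (hd : 1 ≤ d) (hreg : G.IsRegularOfDegree d)
    (lam : ℝ)
    (hlam : ∀ x : V → ℝ, (∑ i, x i) = 0 →
      x ⬝ᵥ ((G.adjMatrix ℝ) *ᵥ x) ≤ lam * (∑ i, (x i) ^ 2)) :
    G.IsExpander (((d : ℝ) - lam) / (2 * d)) := by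
  intro U hU
  have hd_pos : (0 : ℝ) < d := by exact_mod_cast hd
  have hcut := hreg.le_card_mul_card_interedges_compl hlam U.toFinset
  have hbdry : (#(G.interedges U.toFinset U.toFinsetᶜ) : ℝ) ≤ d * (G.extNb U).ncard := by
    have := G.card_interedges_compl_le (fun v ↦ (hreg.degree_eq v).le) U.toFinset
    rw [Set.coe_toFinset] at this
    exact_mod_cast this
  rw [Set.ncard_eq_toFinset_card'] at hU ⊢
  set n : ℝ := (Fintype.card V : ℝ)
  set u : ℝ := (#U.toFinset : ℝ)
  rw [div_mul_eq_mul_div, div_le_iff₀ (by positivity)]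
  obtain hu | hu := (show 0 ≤ u by positivity).eq_or_lt
  · rw [← hu, mul_zero]
    positivity
  have hn : 0 < n := by linarith
  rcases le_or_gt lam d with hlam_le | hlam_gt
  · refine le_of_mul_le_mul_left ?_ hn
    calc n * ((d - lam) * u) ≤ 2 * ((d - lam) * u * (n - u)) := by
          nlinarith [mul_nonneg (sub_nonneg.2 hlam_le) hu.le]
      _ ≤ 2 * (n * #(G.interedges U.toFinset U.toFinsetᶜ)) := by linarith
      _ ≤ n * ((G.extNb U).ncard * (2 * d)) := by nlinarith
  · nlinarith
end

section
/- Let c₁ > c₂ > 1, 0 < β < 1, and Δ > 0. Let G = (V,E) be a graph on n vertices satisfying: (1) |E|/|V| ≥ c₁; (2) every vertex subset U ⊆ V of size |U| ≤ βn spans fewer than c₂|U| edges; (3) the maximum degree of G is at most Δ. Then G contains an induced subgraph G* on at least βn vertices which is an α-expander, for α = (c₁−c₂)/(Δ·⌈log₂(1/β)⌉). -/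
open scoped Classical

/-- The set of edges of `G` spanned by a vertex set `U` (both endpoints in `U`). -/
def SimpleGraph.spannedEdges {V : Type*} (G : SimpleGraph V) (U : Set V) : Set (Sym2 V) :=
  {e | e ∈ G.edgeSet ∧ ∀ v ∈ e, v ∈ U}

/-- Key counting lemma: removing a set `U'` from `S` destroys at most
`e(U') + Δ·|NS|` spanned edges, where `NS` contains all external neighbors of `U'` in `S`. -/
lemma key_count {V : Type*} [Fintype V] (G : SimpleGraph V) (S U' NS : Set V)
    (Δ : ℝ) (hdeg : ∀ v : V, (G.degree v : ℝ) ≤ Δ)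
    (hmem : ∀ b, b ∈ S → b ∉ U' → (∃ a ∈ U', G.Adj a b) → b ∈ NS) :
    ((G.spannedEdges S).ncard : ℝ) ≤
      ((G.spannedEdges (S \ U')).ncard : ℝ) + ((G.spannedEdges U').ncard : ℝ)
        + Δ * NS.ncard := by
  classical
  set C : Set (Sym2 V) := ⋃ v ∈ NS, G.incidenceSet v with hC
  have hsub : G.spannedEdges S ⊆ G.spannedEdges (S \ U') ∪ G.spannedEdges U' ∪ C := by
    intro e he
    induction e using Sym2.ind with
    | _ a b =>
      obtain ⟨heE, hv⟩ := he
      have hadj : G.Adj a b := heE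
      have ha : a ∈ S := hv a (Sym2.mem_mk_left a b)
      have hb : b ∈ S := hv b (Sym2.mem_mk_right a b)
      by_cases haU : a ∈ U' <;> by_cases hbU : b ∈ U'
      · refine Or.inl (Or.inr ⟨heE, ?_⟩)
        intro v hv'
        rcases Sym2.mem_iff.1 hv' with rfl | rfl <;> assumption
      · refine Or.inr ?_
        have hbN : b ∈ NS := hmem b hb hbU ⟨a, haU, hadj⟩
        exact Set.mem_biUnion hbN ⟨heE, Sym2.mem_mk_right a b⟩
      · refine Or.inr ?_
        have haN : a ∈ NS := hmem a ha haU ⟨b, hbU, hadj.symm⟩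
        exact Set.mem_biUnion haN ⟨heE, Sym2.mem_mk_left a b⟩
      · refine Or.inl (Or.inl ⟨heE, ?_⟩)
        intro v hv'
        rcases Sym2.mem_iff.1 hv' with rfl | rfl
        · exact ⟨ha, haU⟩
        · exact ⟨hb, hbU⟩
  have hCcard : (C.ncard : ℝ) ≤ Δ * NS.ncard := by
    have h1 : C.toFinset ⊆ NS.toFinset.biUnion (fun v => (G.incidenceSet v).toFinset) := by
      intro e he
      simp only [Set.mem_toFinset, hC, Set.mem_iUnion] at he
      obtain ⟨v, hvNS, hve⟩ := he
      simp only [Finset.mem_biUnion, Set.mem_toFinset]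
      exact ⟨v, hvNS, hve⟩
    have h2 : C.ncard ≤ ∑ v ∈ NS.toFinset, G.degree v := by
      rw [Set.ncard_eq_toFinset_card']
      calc C.toFinset.card ≤ (NS.toFinset.biUnion (fun v => (G.incidenceSet v).toFinset)).card :=
            Finset.card_le_card h1
        _ ≤ ∑ v ∈ NS.toFinset, (G.incidenceSet v).toFinset.card := Finset.card_biUnion_le
        _ = ∑ v ∈ NS.toFinset, G.degree v := by
            refine Finset.sum_congr rfl fun v _ => ?_
            rw [Set.toFinset_card]
            convert G.card_incidenceSet_eq_degree v using 2
    calc (C.ncard : ℝ) ≤ ((∑ v ∈ NS.toFinset, G.degree v : ℕ) : ℝ) := by exact_mod_cast h2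
      _ = ∑ v ∈ NS.toFinset, (G.degree v : ℝ) := by push_cast; ring
      _ ≤ ∑ _v ∈ NS.toFinset, Δ := Finset.sum_le_sum fun v _ => hdeg v
      _ = NS.toFinset.card * Δ := by rw [Finset.sum_const, nsmul_eq_mul]
      _ = Δ * NS.ncard := by rw [Set.ncard_eq_toFinset_card']; ring
  have hA : (G.spannedEdges S).ncard ≤
      (G.spannedEdges (S \ U')).ncard + (G.spannedEdges U').ncard + C.ncard := by
    calc (G.spannedEdges S).ncard
        ≤ (G.spannedEdges (S \ U') ∪ G.spannedEdges U' ∪ C).ncard :=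
          Set.ncard_le_ncard hsub (Set.toFinite _)
      _ ≤ (G.spannedEdges (S \ U') ∪ G.spannedEdges U').ncard + C.ncard :=
          Set.ncard_union_le _ _
      _ ≤ (G.spannedEdges (S \ U')).ncard + (G.spannedEdges U').ncard + C.ncard := by
          have := Set.ncard_union_le (G.spannedEdges (S \ U')) (G.spannedEdges U')
          omega
  have hA' : ((G.spannedEdges S).ncard : ℝ) ≤
      ((G.spannedEdges (S \ U')).ncard : ℝ) + ((G.spannedEdges U').ncard : ℝ) + C.ncard := by
    exact_mod_cast hA
  linarith

/-- Main induction: any nonempty set `S` whose spanned-edge count exceeds the potential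
`c₂|S| + Δα|S|·L(|S|)` contains a subset `W` of size `> βn` inducing an `α`-expander. -/
lemma expander_aux {V : Type*} [Fintype V] (G : SimpleGraph V) (c₂ β Δ α : ℝ) (L : ℕ → ℤ)
    (hΔ : 0 < Δ) (hα : 0 < α)
    (hsparse : ∀ U : Set V, U.Nonempty → (U.ncard : ℝ) ≤ β * (Fintype.card V : ℝ) →
      ((G.spannedEdges U).ncard : ℝ) < c₂ * U.ncard)
    (hdeg : ∀ v : V, (G.degree v : ℝ) ≤ Δ)
    (hL0 : ∀ s : ℕ, 0 ≤ L s)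
    (hLmono : ∀ ⦃a b : ℕ⦄, a ≤ b → L a ≤ L b)
    (hLstep : ∀ u s : ℕ, 1 ≤ u → 2 * u ≤ s → β * (Fintype.card V : ℝ) < s →
      L u ≤ L s - 1) :
    ∀ m : ℕ, ∀ S : Set V, S.ncard ≤ m → S.Nonempty →
      c₂ * S.ncard + Δ * α * S.ncard * ((L S.ncard : ℤ) : ℝ) ≤ ((G.spannedEdges S).ncard : ℝ) →
      ∃ W : Set V, W ⊆ S ∧ β * (Fintype.card V : ℝ) ≤ (W.ncard : ℝ) ∧
        (G.induce W).IsExpander α := by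
  intro m
  induction m with
  | zero =>
    intro S hm hne _
    have := (Set.ncard_pos (S.toFinite)).2 hne
    omega
  | succ m ih =>
    intro S hm hne hE
    set s : ℕ := S.ncard with hsdef
    have hs1 : 1 ≤ s := (Set.ncard_pos (S.toFinite)).2 hne
    have hLs0 : (0:ℝ) ≤ ((L s : ℤ) : ℝ) := by exact_mod_cast hL0 s
    have hbig : β * (Fintype.card V : ℝ) < (s : ℝ) := by
      by_contra h
      push_neg at h
      have hsp := hsparse S hne h
      have h0 : (0:ℝ) ≤ Δ * α * s * ((L s : ℤ) : ℝ) := by positivity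
      rw [← hsdef] at hsp
      linarith
    by_cases hexp : (G.induce S).IsExpander α
    · exact ⟨S, subset_rfl, le_of_lt hbig, hexp⟩
    · unfold SimpleGraph.IsExpander at hexp
      push_neg at hexp
      obtain ⟨U, hUhalf, hUN⟩ := hexp
      set U' : Set V := Subtype.val '' U with hU'def
      have hU'S : U' ⊆ S := by
        rintro _ ⟨x, _, rfl⟩; exact x.2
      have hcardU : U'.ncard = U.ncard :=
        Set.ncard_image_of_injective U Subtype.val_injective
      have hScard : Fintype.card ↥S = s := by
        rw [← Nat.card_eq_fintype_card, Nat.card_coe_set_eq]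
      have hu1 : 1 ≤ U'.ncard := by
        by_contra h0
        have hU0 : U.ncard = 0 := by omega
        have hnn : (0:ℝ) ≤ (((G.induce S).extNb U).ncard : ℝ) := by positivity
        rw [hU0] at hUN
        simp at hUN
        linarith
      have huhalf : 2 * U'.ncard ≤ s := by
        rw [hScard] at hUhalf
        have hUr : (U'.ncard : ℝ) ≤ (s : ℝ) / 2 := by rw [hcardU]; exact hUhalf
        have h2 : ((2 * U'.ncard : ℕ) : ℝ) ≤ (s : ℝ) := by push_cast; linarith
        exact_mod_cast h2
      have hus : U'.ncard < s := by omega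
      set NS : Set V := Subtype.val '' ((G.induce S).extNb U) with hNSdef
      have hNScard : NS.ncard = ((G.induce S).extNb U).ncard :=
        Set.ncard_image_of_injective _ Subtype.val_injective
      have hNSlt : (NS.ncard : ℝ) < α * U'.ncard := by
        rw [hNScard, hcardU]; exact hUN
      have hmem : ∀ b, b ∈ S → b ∉ U' → (∃ a ∈ U', G.Adj a b) → b ∈ NS := by
        rintro b hbS hbU' ⟨a, haU', hadj⟩
        obtain ⟨a₀, ha₀, rfl⟩ := haU'
        refine ⟨⟨b, hbS⟩, ⟨?_, ⟨a₀, ha₀, ?_⟩⟩, rfl⟩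
        · intro hmem'
          exact hbU' ⟨_, hmem', rfl⟩
        · exact hadj
      have hsplit := key_count G S U' NS Δ hdeg hmem
      by_cases hdense :
          c₂ * (U'.ncard : ℝ) + Δ * α * U'.ncard * ((L U'.ncard : ℤ) : ℝ)
            ≤ ((G.spannedEdges U').ncard : ℝ)
      · -- recurse into the dense small set U'
        have hUm : U'.ncard ≤ m := by omega
        have hU'ne : U'.Nonempty := by
          apply Set.nonempty_of_ncard_ne_zero
          omega
        obtain ⟨W, hWU, hWcard, hWexp⟩ := ih U' hUm hU'ne hdense
        exact ⟨W, hWU.trans hU'S, hWcard, hWexp⟩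
      · push_neg at hdense
        set S' : Set V := S \ U' with hS'def
        have hS'card : S'.ncard = s - U'.ncard := Set.ncard_diff hU'S
        have hS'm : S'.ncard ≤ m := by omega
        have hS'ne : S'.Nonempty := by
          apply Set.nonempty_of_ncard_ne_zero
          omega
        have hLu : ((L U'.ncard : ℤ) : ℝ) ≤ ((L s : ℤ) : ℝ) - 1 := by
          have h := hLstep U'.ncard s hu1 huhalf hbig
          have h' : ((L U'.ncard : ℤ) : ℝ) ≤ ((L s - 1 : ℤ) : ℝ) := by exact_mod_cast h
          push_cast at h'
          linarith
        have hLsu : ((L (s - U'.ncard) : ℤ) : ℝ) ≤ ((L s : ℤ) : ℝ) := by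
          exact_mod_cast hLmono (Nat.sub_le s U'.ncard)
        have hLsu0 : (0:ℝ) ≤ ((L (s - U'.ncard) : ℤ) : ℝ) := by
          exact_mod_cast hL0 (s - U'.ncard)
        have hcast : ((s - U'.ncard : ℕ) : ℝ) = (s : ℝ) - (U'.ncard : ℝ) := by
          have hle : U'.ncard ≤ s := le_of_lt hus
          exact Nat.cast_sub hle
        have hE' : c₂ * S'.ncard + Δ * α * S'.ncard * ((L S'.ncard : ℤ) : ℝ) ≤
            ((G.spannedEdges S').ncard : ℝ) := by
          rw [hS'card, hcast]
          have hΔα : (0:ℝ) ≤ Δ * α := by positivity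
          have hNsU : Δ * (NS.ncard : ℝ) ≤ Δ * (α * U'.ncard) :=
            mul_le_mul_of_nonneg_left (le_of_lt hNSlt) (le_of_lt hΔ)
          have husR : (U'.ncard : ℝ) ≤ (s : ℝ) := by exact_mod_cast le_of_lt hus
          have hk2 : (0:ℝ) ≤ (Δ * α) * (((s:ℝ) - U'.ncard)
              * (((L s : ℤ):ℝ) - ((L (s - U'.ncard) : ℤ):ℝ))) := by
            apply mul_nonneg hΔα
            apply mul_nonneg
            · linarith
            · linarith
          have hk3 : (0:ℝ) ≤ (Δ * α) * ((U'.ncard : ℝ)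
              * (((L s : ℤ):ℝ) - ((L U'.ncard : ℤ):ℝ) - 1)) := by
            apply mul_nonneg hΔα
            apply mul_nonneg
            · positivity
            · linarith
          nlinarith [hsplit, hE, hdense, hNsU, hk2, hk3]
        obtain ⟨W, hWS', hWcard, hWexp⟩ := ih S' hS'm hS'ne hE'
        exact ⟨W, hWS'.trans Set.diff_subset, hWcard, hWexp⟩

theorem stmt_9 {V : Type*} [Fintype V] (G : SimpleGraph V) (c₁ c₂ β Δ : ℝ)
    (hc : c₁ > c₂) (hc2 : c₂ > 1) (hβ0 : 0 < β) (hβ1 : β < 1) (hΔ : 0 < Δ)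
    (hdens : c₁ ≤ (G.edgeSet.ncard : ℝ) / (Fintype.card V : ℝ))
    (hsparse : ∀ U : Set V, U.Nonempty → (U.ncard : ℝ) ≤ β * (Fintype.card V : ℝ) →
      ((G.spannedEdges U).ncard : ℝ) < c₂ * U.ncard)
    (hdeg : ∀ v : V, (G.degree v : ℝ) ≤ Δ) :
    ∃ W : Set V, β * (Fintype.card V : ℝ) ≤ (W.ncard : ℝ) ∧
      (G.induce W).IsExpander ((c₁ - c₂) / (Δ * (⌈Real.logb 2 (1 / β)⌉ : ℝ))) := by
  classical
  have hn0 : 0 < Fintype.card V := by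
    by_contra h
    have h0 : Fintype.card V = 0 := by omega
    rw [h0] at hdens
    simp at hdens
    linarith
  have hn0R : (0:ℝ) < (Fintype.card V : ℝ) := by exact_mod_cast hn0
  have hβn : (0:ℝ) < β * (Fintype.card V : ℝ) := by positivity
  have hlogpos : 0 < Real.logb 2 (1 / β) :=
    Real.logb_pos one_lt_two (one_lt_one_div hβ0 hβ1)
  set t : ℤ := ⌈Real.logb 2 (1 / β)⌉ with htdef
  have ht1 : 1 ≤ t := by
    have := Int.ceil_pos.mpr hlogpos
    omega
  have htR : (1:ℝ) ≤ (t : ℝ) := by exact_mod_cast ht1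
  set α : ℝ := (c₁ - c₂) / (Δ * (t : ℝ)) with hαdef
  have hα : 0 < α := by
    apply div_pos (by linarith)
    apply mul_pos hΔ (by linarith)
  set L : ℕ → ℤ := fun s => max 0 ⌈Real.logb 2 ((s : ℝ) / (β * (Fintype.card V : ℝ)))⌉
    with hLdef
  have hL0 : ∀ s : ℕ, 0 ≤ L s := fun s => le_max_left _ _
  have hLmono : ∀ ⦃a b : ℕ⦄, a ≤ b → L a ≤ L b := by
    intro a b hab
    rcases Nat.eq_zero_or_pos a with rfl | ha
    · have h0 : L 0 = 0 := by simp [hLdef]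
      rw [h0]
      exact hL0 b
    · apply max_le_max le_rfl
      apply Int.ceil_le_ceil
      apply Real.logb_le_logb_of_le one_lt_two
      · apply div_pos _ hβn
        exact_mod_cast ha
      · exact (div_le_div_iff_of_pos_right hβn).mpr (by exact_mod_cast hab)
  have hLstep : ∀ u s : ℕ, 1 ≤ u → 2 * u ≤ s → β * (Fintype.card V : ℝ) < (s : ℝ) →
      L u ≤ L s - 1 := by
    intro u s hu hus hsbig
    have hu0 : (0:ℝ) < (u : ℝ) := by exact_mod_cast hu
    have hq : (0:ℝ) < (u : ℝ) / (β * (Fintype.card V : ℝ)) := div_pos hu0 hβn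
    have hceil_s : 1 ≤ ⌈Real.logb 2 ((s : ℝ) / (β * (Fintype.card V : ℝ)))⌉ := by
      have hpos : 0 < Real.logb 2 ((s : ℝ) / (β * (Fintype.card V : ℝ))) := by
        apply Real.logb_pos one_lt_two
        rw [lt_div_iff₀ hβn]
        linarith
      have := Int.ceil_pos.mpr hpos
      omega
    have hLs : L s = ⌈Real.logb 2 ((s : ℝ) / (β * (Fintype.card V : ℝ)))⌉ := by
      simp only [hLdef]
      exact max_eq_right (by omega)
    have hkey : Real.logb 2 ((u : ℝ) / (β * (Fintype.card V : ℝ)))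
        = Real.logb 2 ((2 * u : ℝ) / (β * (Fintype.card V : ℝ))) - 1 := by
      have h2 : ((2 * u : ℝ)) / (β * (Fintype.card V : ℝ))
          = 2 * ((u : ℝ) / (β * (Fintype.card V : ℝ))) := by ring
      rw [h2, Real.logb_mul two_ne_zero (ne_of_gt hq),
        Real.logb_self_eq_one one_lt_two]
      ring
    have hmono2 : Real.logb 2 ((2 * u : ℝ) / (β * (Fintype.card V : ℝ)))
        ≤ Real.logb 2 ((s : ℝ) / (β * (Fintype.card V : ℝ))) := by
      apply Real.logb_le_logb_of_le one_lt_two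
      · positivity
      · gcongr
        exact_mod_cast hus
    have hceil_u : ⌈Real.logb 2 ((u : ℝ) / (β * (Fintype.card V : ℝ)))⌉
        ≤ ⌈Real.logb 2 ((s : ℝ) / (β * (Fintype.card V : ℝ)))⌉ - 1 := by
      rw [hkey]
      have hc1 : ⌈Real.logb 2 ((2 * u : ℝ) / (β * (Fintype.card V : ℝ))) - 1⌉
          = ⌈Real.logb 2 ((2 * u : ℝ) / (β * (Fintype.card V : ℝ)))⌉ - 1 := by
        simpa using Int.ceil_sub_int
          (Real.logb 2 ((2 * u : ℝ) / (β * (Fintype.card V : ℝ)))) 1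
      rw [hc1]
      have := Int.ceil_le_ceil hmono2
      omega
    rw [hLs]
    simp only [hLdef]
    apply max_le
    · omega
    · omega
  -- apply the main induction to `univ`
  have hne : (Set.univ : Set V).Nonempty := by
    have : Nonempty V := Fintype.card_pos_iff.mp hn0
    exact Set.univ_nonempty
  have hucard : (Set.univ : Set V).ncard = Fintype.card V := by
    rw [Set.ncard_univ, Nat.card_eq_fintype_card]
  have hspan : G.spannedEdges Set.univ = G.edgeSet := by
    ext e
    simp [SimpleGraph.spannedEdges]
  have hEV : c₂ * ((Set.univ : Set V).ncard : ℝ)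
      + Δ * α * ((Set.univ : Set V).ncard : ℝ) * ((L (Set.univ : Set V).ncard : ℤ) : ℝ)
      ≤ ((G.spannedEdges (Set.univ : Set V)).ncard : ℝ) := by
    rw [hucard, hspan]
    have hdivn : ((Fintype.card V : ℝ)) / (β * (Fintype.card V : ℝ)) = 1 / β := by
      field_simp
    have hLn : L (Fintype.card V) ≤ t := by
      simp only [hLdef, hdivn, htdef]
      exact max_le (by omega) le_rfl
    have hLnR : ((L (Fintype.card V) : ℤ) : ℝ) ≤ (t : ℝ) := by exact_mod_cast hLn
    have hedge : c₁ * (Fintype.card V : ℝ) ≤ (G.edgeSet.ncard : ℝ) :=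
      (le_div_iff₀ hn0R).mp hdens
    have h1 : Δ * α * (Fintype.card V : ℝ) * ((L (Fintype.card V) : ℤ) : ℝ)
        ≤ Δ * α * (Fintype.card V : ℝ) * (t : ℝ) := by
      apply mul_le_mul_of_nonneg_left hLnR (by positivity)
    have h2 : Δ * α * (Fintype.card V : ℝ) * (t : ℝ) = (c₁ - c₂) * (Fintype.card V : ℝ) := by
      rw [hαdef]
      have htne : (t : ℝ) ≠ 0 := by linarith
      field_simp
    linarith
  obtain ⟨W, _, hWcard, hWexp⟩ :=
    expander_aux G c₂ β Δ α L hΔ hα hsparse hdeg hL0 hLmono hLstep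
      (Fintype.card V) Set.univ (le_of_eq hucard) hne hEV
  exact ⟨W, hWcard, hWexp⟩
end

section
/- Let d > 0 and r > 0 be reals. Let G = (V,E) be a graph on N vertices with average degree at least d (i.e., 2|E| ≥ dN), and let n be an integer with 0 < n < N such that every vertex subset W ⊆ V of size |W| ≤ 2n spans at most (d/(8r))·|W| edges of G. Then for every edge subset E₀ ⊆ E with |E₀| ≥ |E|/r, the graph (V,E₀) contains a path with n edges. -/
open scoped Classical

open Finset SimpleGraph in
lemma dfs_aux {W : Type*} [Fintype W] [DecidableEq W] (K : SimpleGraph W) (n : ℕ)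
    (hn : 1 ≤ n) (hcard : n ≤ Fintype.card W) :
    ∀ (μ : ℕ) (S : Finset W) (u w : W) (p : K.Walk u w),
      2 * (Finset.univ \ (S ∪ p.support.toFinset)).card + p.length + 1 ≤ μ →
      p.IsPath → (∀ x ∈ S, x ∉ p.support) → p.length < n → S.card < n →
      (∀ s ∈ S, ∀ y, K.Adj s y → y ∈ S ∨ y ∈ p.support) →
      (∃ (a b : W) (q : K.Walk a b), q.IsPath ∧ q.length = n) ∨
      (∃ S' : Finset W, S'.card = n ∧ (K.extNb ↑S').ncard < n) := by
  intro μ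
  induction μ with
  | zero => intro S u w p hμ _ _ _ _ _; omega
  | succ μ ih =>
    intro S u w p hμ hpath hdisj hlen hScard hinv
    by_cases hpush : ∃ y, K.Adj u y ∧ y ∉ S ∧ y ∉ p.support
    · obtain ⟨y, hadj, hyS, hyp⟩ := hpush
      have hp2path : (Walk.cons hadj.symm p).IsPath := hpath.cons hyp
      by_cases hlen2 : (Walk.cons hadj.symm p).length = n
      · exact Or.inl ⟨y, w, _, hp2path, hlen2⟩
      · apply ih S y w (Walk.cons hadj.symm p) ?_ hp2path ?_ ?_ hScard ?_
        · -- measure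
          have hsupp : (Walk.cons hadj.symm p).support.toFinset
              = insert y p.support.toFinset := by
            simp [Walk.support_cons]
          have hyT : y ∈ Finset.univ \ (S ∪ p.support.toFinset) := by
            simp [hyS, hyp]
          have : Finset.univ \ (S ∪ insert y p.support.toFinset)
              = (Finset.univ \ (S ∪ p.support.toFinset)).erase y := by
            ext z
            simp only [Finset.mem_sdiff, Finset.mem_univ, true_and, Finset.mem_union,
              Finset.mem_insert, Finset.mem_erase, not_or]
            tauto
          rw [hsupp, this, Finset.card_erase_of_mem hyT]
          have hTpos : 0 < (Finset.univ \ (S ∪ p.support.toFinset)).card :=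
            Finset.card_pos.2 ⟨y, hyT⟩
          simp only [Walk.length_cons] at *
          omega
        · intro x hx
          simp only [Walk.support_cons, List.mem_cons]
          push_neg
          exact ⟨fun h => hyS (h ▸ hx), hdisj x hx⟩
        · simp only [Walk.length_cons] at hlen2 ⊢; omega
        · intro s hs z hz
          rcases hinv s hs z hz with h | h
          · exact Or.inl h
          · exact Or.inr (by simp [Walk.support_cons, h])
    · push_neg at hpush
      have hpush' : ∀ y, K.Adj u y → y ∈ S ∨ y ∈ p.support :=
        fun y hy => or_iff_not_imp_left.2 (hpush y hy)
      clear hpush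
      have huS : u ∉ S := fun h => hdisj u h p.start_mem_support
      have hS'card : (insert u S).card = S.card + 1 := Finset.card_insert_of_notMem huS
      cases p with
      | nil =>
        by_cases hSn : (insert u S).card = n
        · refine Or.inr ⟨insert u S, hSn, ?_⟩
          have : K.extNb ↑(insert u S) = ∅ := by
            ext v
            simp only [SimpleGraph.extNb, Set.mem_setOf_eq, Set.mem_empty_iff_false, iff_false,
              not_and, Finset.coe_insert, Set.mem_insert_iff, Finset.mem_coe]
            push_neg
            intro hv s hs hadj
            rcases hs with rfl | hs
            · rcases hpush' v hadj with h | h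
              · exact hv.2 h
              · simp only [Walk.support_nil, List.mem_singleton] at h
                exact hv.1 h
            · rcases hinv s hs v hadj with h | h
              · exact hv.2 h
              · simp only [Walk.support_nil, List.mem_singleton] at h
                exact hv.1 h
          rw [this]; simpa using (show 0 < n by omega)
        · -- find fresh vertex
          have hlt : (insert u S).card < Fintype.card W := by omega
          have : ∃ v, v ∉ insert u S := by
            by_contra hall
            push_neg at hall
            have : (insert u S) = Finset.univ := Finset.eq_univ_iff_forall.2 hall
            rw [this, Finset.card_univ] at hlt; omega
          obtain ⟨v, hv⟩ := this
          apply ih (insert u S) v v Walk.nil ?_ Walk.IsPath.nil ?_ (by simpa using (show 0 < n by omega))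
            (by omega) ?_
          · -- measure
            have hvT : v ∈ Finset.univ \ (S ∪ (Walk.nil : K.Walk u u).support.toFinset) := by
              simp only [Walk.support_nil, List.toFinset_cons, List.toFinset_nil,
                LawfulSingleton.insert_empty_eq, Finset.mem_sdiff, Finset.mem_univ, true_and,
                Finset.mem_union, Finset.mem_insert, Finset.mem_singleton]
              simp only [Finset.mem_insert] at hv
              push_neg at hv
              simp [hv.1, hv.2]
            have heq : Finset.univ \ (insert u S ∪ (Walk.nil : K.Walk v v).support.toFinset)
                = (Finset.univ \ (S ∪ (Walk.nil : K.Walk u u).support.toFinset)).erase v := by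
              ext z
              simp only [Walk.support_nil, List.toFinset_cons, List.toFinset_nil,
                LawfulSingleton.insert_empty_eq, Finset.mem_sdiff, Finset.mem_univ, true_and,
                Finset.mem_union, Finset.mem_insert, Finset.mem_singleton,
                Finset.mem_erase, not_or]
              tauto
            rw [heq, Finset.card_erase_of_mem hvT]
            have hTpos : 0 < (Finset.univ \ (S ∪ (Walk.nil : K.Walk u u).support.toFinset)).card :=
              Finset.card_pos.2 ⟨v, hvT⟩
            simp only [Walk.length_nil] at *
            omega
          · intro x hx
            simp only [Walk.support_nil, List.mem_singleton]
            exact fun h => hv (h ▸ hx)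
          · intro s hs z hz
            simp only [Finset.mem_insert] at hs
            rcases hs with rfl | hs
            · rcases hpush' z hz with h | h
              · exact Or.inl (Finset.mem_insert_of_mem h)
              · simp only [Walk.support_nil, List.mem_singleton] at h
                exact Or.inl (by rw [h]; exact Finset.mem_insert_self _ _)
            · rcases hinv s hs z hz with h | h
              · exact Or.inl (Finset.mem_insert_of_mem h)
              · simp only [Walk.support_nil, List.mem_singleton] at h
                exact Or.inl (by rw [h]; exact Finset.mem_insert_self _ _)
      | cons h q =>
        rename_i x
        by_cases hSn : (insert u S).card = n
        · refine Or.inr ⟨insert u S, hSn, ?_⟩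
          have hsub : K.extNb ↑(insert u S) ⊆ ↑q.support.toFinset := by
            intro v hv
            obtain ⟨hvS, s, hs, hadj⟩ := hv
            simp only [Finset.coe_insert, Set.mem_insert_iff, Finset.mem_coe, not_or] at hvS
            simp only [Finset.coe_insert, Set.mem_insert_iff, Finset.mem_coe] at hs
            have hmem : v ∈ (Walk.cons h q).support := by
              rcases hs with rfl | hs
              · rcases hpush' v hadj with h' | h'
                · exact absurd h' hvS.2
                · exact h'
              · rcases hinv s hs v hadj with h' | h'
                · exact absurd h' hvS.2
                · exact h'
            simp only [Walk.support_cons, List.mem_cons] at hmem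
            rcases hmem with rfl | hmem
            · exact absurd rfl hvS.1
            · simpa using hmem
          have h1 : (K.extNb ↑(insert u S)).ncard ≤ q.support.toFinset.card := by
            rw [← Set.ncard_coe_finset]
            exact Set.ncard_le_ncard hsub (Set.toFinite _)
          have h2 : q.support.toFinset.card ≤ q.length + 1 := by
            have := q.support.toFinset_card_le
            rwa [Walk.length_support] at this
          simp only [Walk.length_cons] at hlen
          omega
        · apply ih (insert u S) x w q ?_ hpath.of_cons ?_ ?_ (by omega) ?_
          · -- measure : same T, length decreases
            have heq : insert u S ∪ q.support.toFinset
                = S ∪ (Walk.cons h q).support.toFinset := by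
              ext z
              simp [Walk.support_cons, or_comm, or_assoc, or_left_comm]
            rw [heq]
            simp only [Walk.length_cons] at hμ
            omega
          · intro z hz
            simp only [Finset.mem_insert] at hz
            rcases hz with rfl | hz
            · have := hpath
              rw [Walk.cons_isPath_iff] at this
              exact this.2
            · intro hmem
              exact hdisj z hz (by simp [Walk.support_cons, hmem])
          · simp only [Walk.length_cons] at hlen; omega
          · intro s hs z hz
            simp only [Finset.mem_insert] at hs
            have key : z ∈ S ∨ z ∈ (Walk.cons h q).support := by
              rcases hs with rfl | hs
              · exact hpush' z hz
              · exact hinv s hs z hz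
            rcases key with h' | h'
            · exact Or.inl (Finset.mem_insert_of_mem h')
            · simp only [Walk.support_cons, List.mem_cons] at h'
              rcases h' with rfl | h'
              · exact Or.inl (Finset.mem_insert_self _ _)
              · exact Or.inr h'

lemma arith_final (d r x : ℝ) (hd : 0 < d) (hr : 0 < r) (hx : 0 < x)
    (h : d/(2*r) * x ≤ 2*(d/(8*r))*(2*x - 1)) : False := by
  have h8r : (0:ℝ) < 8*r := by positivity
  have h2r : (0:ℝ) < 2*r := by positivity
  have h' := mul_le_mul_of_nonneg_right h (le_of_lt h8r)
  have l1 : d/(2*r)*x*(8*r) = 4*(d*x) := by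
    rw [div_mul_eq_mul_div, div_mul_eq_mul_div, div_eq_iff (ne_of_gt h2r)]
    ring
  have hc : d/(8*r)*(8*r) = d := div_mul_cancel₀ d (ne_of_gt h8r)
  have l2 : 2*(d/(8*r))*(2*x - 1)*(8*r) = 2*d*(2*x-1) := by
    rw [show 2*(d/(8*r))*(2*x - 1)*(8*r) = 2*(2*x-1)*(d/(8*r)*(8*r)) from by ring, hc]
    ring
  rw [l1, l2] at h'
  nlinarith [hd]

set_option maxHeartbeats 2000000 in
theorem stmt_11 {V : Type*} [Fintype V] (G : SimpleGraph V) (d r : ℝ)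
    (hd : 0 < d) (hr : 0 < r)
    (havg : d * (Fintype.card V : ℝ) ≤ 2 * (G.edgeSet.ncard : ℝ))
    (n : ℕ) (hn0 : 0 < n) (hnN : n < Fintype.card V)
    (hsparse : ∀ W : Set V, (W.ncard : ℝ) ≤ 2 * n →
      ((G.spannedEdges W).ncard : ℝ) ≤ d / (8 * r) * W.ncard)
    (E₀ : Set (Sym2 V)) (hE₀ : E₀ ⊆ G.edgeSet)
    (hE₀card : (G.edgeSet.ncard : ℝ) / r ≤ (E₀.ncard : ℝ)) :
    ∃ (u w : V) (p : (SimpleGraph.fromEdgeSet E₀).Walk u w),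
      p.IsPath ∧ p.length = n := by
  classical
  set H := SimpleGraph.fromEdgeSet E₀ with hHdef
  have hNpos : 0 < Fintype.card V := lt_trans hn0 hnN
  have hne : Nonempty V := Fintype.card_pos_iff.1 hNpos
  have hHedge : H.edgeSet = E₀ := by
    rw [hHdef, SimpleGraph.edgeSet_fromEdgeSet]
    ext e
    simp only [Set.mem_diff, Set.mem_setOf_eq]
    exact ⟨fun h => h.1, fun h => ⟨h, G.not_isDiag_of_mem_edgeSet (hE₀ h)⟩⟩
  have hHG : H ≤ G := by
    rw [← SimpleGraph.edgeSet_subset_edgeSet, hHedge]; exact hE₀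
  set δ : ℝ := d / (2*r) with hδdef
  have hδpos : 0 < δ := by positivity
  set F : Finset V → Finset (Sym2 V) :=
    fun A => Finset.univ.filter (fun e => e ∈ H.edgeSet ∧ ∀ v ∈ e, v ∈ A) with hFdef
  have hFcoe : ∀ A : Finset V, H.spannedEdges ↑A = ↑(F A) := by
    intro A
    ext e
    simp [SimpleGraph.spannedEdges, hFdef]
  have hFG : ∀ A : Finset V, ((F A).card : ℝ) ≤ ((G.spannedEdges ↑A).ncard : ℝ) := by
    intro A
    have hsub : (↑(F A) : Set (Sym2 V)) ⊆ G.spannedEdges ↑A := by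
      rw [← hFcoe]
      rintro e ⟨he, hv⟩
      exact ⟨(SimpleGraph.edgeSet_subset_edgeSet.2 hHG) he, hv⟩
    have := Set.ncard_le_ncard hsub (Set.toFinite _)
    rw [Set.ncard_coe_finset] at this
    exact_mod_cast this
  -- existence of a minimal "dense" set A
  have hPuniv : (Finset.univ : Finset V).Nonempty ∧
      δ * ((Finset.univ : Finset V).card : ℝ) ≤ ((F Finset.univ).card : ℝ) := by
    refine ⟨Finset.univ_nonempty, ?_⟩
    have h1 : (↑(F Finset.univ) : Set (Sym2 V)) = E₀ := by
      rw [← hFcoe]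
      ext e
      simp [SimpleGraph.spannedEdges, hHedge]
    have h2 : ((F Finset.univ).card : ℝ) = (E₀.ncard : ℝ) := by
      rw [← Set.ncard_coe_finset, h1]
    rw [h2, Finset.card_univ]
    have h2r : (0:ℝ) < 2*r := by positivity
    have h3 : δ * (Fintype.card V : ℝ) ≤ (G.edgeSet.ncard : ℝ) / r := by
      rw [hδdef, div_mul_eq_mul_div, div_le_div_iff₀ h2r hr]
      nlinarith [havg]
    exact h3.trans hE₀card
  obtain ⟨A, hA, hAmin⟩ := Finset.exists_min_image
    ((Finset.univ : Finset (Finset V)).filter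
      (fun B => B.Nonempty ∧ δ * (B.card : ℝ) ≤ ((F B).card : ℝ)))
    Finset.card (by
      exact ⟨Finset.univ, by simpa using hPuniv⟩)
  rw [Finset.mem_filter] at hA
  obtain ⟨-, hAne, hAdense⟩ := hA
  -- minimum degree of A in H
  have hmindeg : ∀ v ∈ A, δ ≤ ((A.filter (H.Adj v)).card : ℝ) := by
    intro v hv
    by_contra hcon
    push_neg at hcon
    have hc1 : 1 ≤ A.card := hAne.card_pos
    have hcard2 : 2 ≤ A.card := by
      rcases Nat.lt_or_ge A.card 2 with h | h
      · exfalso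
        have hA1 : A = {v} := by
          obtain ⟨a, ha⟩ := Finset.card_eq_one.1 (le_antisymm (by omega) hc1)
          rw [ha] at hv ⊢
          rw [Finset.mem_singleton] at hv
          rw [hv]
        have hFA : F A = ∅ := by
          rw [Finset.eq_empty_iff_forall_notMem]
          intro e
          induction e using Sym2.ind with
          | _ a b =>
            intro hmem
            simp only [hFdef, Finset.mem_filter, Finset.mem_univ, true_and] at hmem
            obtain ⟨he, hall⟩ := hmem
            have ha : a ∈ ({v} : Finset V) := hA1 ▸ hall a (Sym2.mem_mk_left a b)
            have hb : b ∈ ({v} : Finset V) := hA1 ▸ hall b (Sym2.mem_mk_right a b)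
            rw [Finset.mem_singleton] at ha hb
            have : H.Adj a b := H.mem_edgeSet.mp he
            rw [ha, hb] at this
            exact H.irrefl this
        rw [hFA] at hAdense
        simp only [Finset.card_empty, Nat.cast_zero] at hAdense
        have hc1' : (1:ℝ) ≤ (A.card : ℝ) := by exact_mod_cast hc1
        nlinarith [hδpos]
      · exact h
    set B := A.erase v with hBdef
    have hBcard : B.card = A.card - 1 := Finset.card_erase_of_mem hv
    have hBne : B.Nonempty := Finset.card_pos.1 (by omega)
    have hsub : F A ⊆ F B ∪ (A.filter (H.Adj v)).image (fun y => s(v, y)) := by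
      intro e
      induction e using Sym2.ind with
      | _ a b =>
        intro he
        simp only [hFdef, Finset.mem_filter, Finset.mem_univ, true_and] at he
        obtain ⟨heH, hall⟩ := he
        have hadj : H.Adj a b := H.mem_edgeSet.mp heH
        by_cases hve : v ∈ s(a, b)
        · refine Finset.mem_union_right _ (Finset.mem_image.2 ?_)
          rw [Sym2.mem_iff] at hve
          rcases hve with rfl | rfl
          · exact ⟨b, Finset.mem_filter.2 ⟨hall b (Sym2.mem_mk_right _ _), hadj⟩, rfl⟩
          · exact ⟨a, Finset.mem_filter.2 ⟨hall a (Sym2.mem_mk_left _ _), hadj.symm⟩,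
              Sym2.eq_swap⟩
        · refine Finset.mem_union_left _ ?_
          simp only [hFdef, Finset.mem_filter, Finset.mem_univ, true_and]
          refine ⟨heH, fun x hx => Finset.mem_erase.2 ⟨?_, hall x hx⟩⟩
          rintro rfl
          exact hve hx
    have hcards : ((F A).card : ℝ) ≤ ((F B).card : ℝ) + ((A.filter (H.Adj v)).card : ℝ) := by
      have h1 := Finset.card_le_card hsub
      have h2 := Finset.card_union_le (F B) ((A.filter (H.Adj v)).image (fun y => s(v, y)))
      have h3 := Finset.card_image_le (s := A.filter (H.Adj v)) (f := fun y => s(v, y))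
      push_cast
      exact_mod_cast (h1.trans h2).trans (by omega)
    have hBcast : (B.card : ℝ) = (A.card : ℝ) - 1 := by
      rw [hBcard]; push_cast [hc1]; ring
    have hBdense : δ * (B.card : ℝ) ≤ ((F B).card : ℝ) := by
      rw [hBcast]; nlinarith [hAdense]
    have hBmem : B ∈ (Finset.univ : Finset (Finset V)).filter
        (fun B => B.Nonempty ∧ δ * (B.card : ℝ) ≤ ((F B).card : ℝ)) := by
      rw [Finset.mem_filter]; exact ⟨Finset.mem_univ _, hBne, hBdense⟩
    have := hAmin B hBmem
    omega
  -- A is large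
  have hAbig : 2 * n < A.card := by
    by_contra hcon
    push_neg at hcon
    have hA2n : (((↑A : Set V)).ncard : ℝ) ≤ 2*n := by
      rw [Set.ncard_coe_finset]; exact_mod_cast hcon
    have h1 := hsparse ↑A hA2n
    rw [Set.ncard_coe_finset] at h1
    have h2 := hFG A
    have hcpos : (0:ℝ) < A.card := by exact_mod_cast hAne.card_pos
    have key : d / (2*r) * (A.card : ℝ) ≤ d / (8*r) * (A.card : ℝ) := by
      rw [← hδdef]
      exact hAdense.trans (h2.trans h1)
    have h2r : (0:ℝ) < 2*r := by positivity
    have h8r : (0:ℝ) < 8*r := by positivity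
    rw [div_mul_eq_mul_div, div_mul_eq_mul_div, div_le_div_iff₀ h2r h8r] at key
    nlinarith [mul_pos (mul_pos hd hcpos) hr]
  -- induced graph on A
  set K : SimpleGraph ↑(↑A : Set V) := H.induce (↑A : Set V) with hKdef
  have hKcard : Fintype.card ↑(↑A : Set V) = A.card := by
    simp [Fintype.card_coe]
  have hcardn : n ≤ Fintype.card ↑(↑A : Set V) := by omega
  -- expansion: no small set with small external neighborhood
  have hexp : ∀ S' : Finset ↑(↑A : Set V), S'.card = n → ¬ ((K.extNb ↑S').ncard < n) := by
    intro S' hS'card hnb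
    set S : Finset V := S'.image Subtype.val with hSdef
    have hScard : S.card = n := by
      rw [hSdef, Finset.card_image_of_injective _ Subtype.val_injective, hS'card]
    have hSA : ∀ x ∈ S, x ∈ A := by
      intro x hx
      rw [hSdef, Finset.mem_image] at hx
      obtain ⟨y, -, rfl⟩ := hx
      exact y.2
    set Nset : Set V := Subtype.val '' (K.extNb ↑S') with hNdef
    have hNcard : Nset.ncard = (K.extNb ↑S').ncard :=
      Set.ncard_image_of_injective _ Subtype.val_injective
    set Nfin : Finset V := Nset.toFinset with hNfindef
    have hNfincard : Nfin.card = Nset.ncard := (Set.ncard_eq_toFinset_card' Nset).symm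
    have hNn : Nfin.card < n := by rw [hNfincard, hNcard]; exact hnb
    set Wf : Finset V := S ∪ Nfin with hWdef
    have hWcard : (Wf.card : ℝ) ≤ 2*(n:ℝ) - 1 := by
      have h1 : Wf.card ≤ S.card + Nfin.card := Finset.card_union_le _ _
      have : Wf.card ≤ n + (n-1) := by omega
      have h2 : (Wf.card : ℕ) ≤ 2*n - 1 := by omega
      have hn1 : 1 ≤ 2*n := by omega
      calc (Wf.card : ℝ) ≤ ((2*n - 1 : ℕ) : ℝ) := by exact_mod_cast h2
      _ = 2*(n:ℝ) - 1 := by push_cast [hn1]; ring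
    -- every A-neighbor of a vertex of S lies in Wf
    have hnbW : ∀ x ∈ S, ∀ y ∈ A.filter (H.Adj x), y ∈ Wf := by
      intro x hx y hy
      rw [Finset.mem_filter] at hy
      obtain ⟨hyA, hadj⟩ := hy
      by_cases hyS : y ∈ S
      · exact Finset.mem_union_left _ hyS
      · refine Finset.mem_union_right _ ?_
        rw [hNfindef, Set.mem_toFinset, hNdef]
        have hyA' : y ∈ (↑A : Set V) := hyA
        refine ⟨⟨y, hyA'⟩, ?_, rfl⟩
        obtain ⟨x', hx', rfl⟩ := Finset.mem_image.1 hx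
        refine ⟨?_, x', hx', ?_⟩
        · intro hmem
          exact hyS (Finset.mem_image.2 ⟨⟨y, hyA'⟩, hmem, rfl⟩)
        · exact hadj
    set K' : SimpleGraph ↑(↑Wf : Set V) := H.induce (↑Wf : Set V) with hK'def
    -- degree lower bound
    have hdeg : ∀ x' : ↑(↑Wf : Set V), ↑x' ∈ S → δ ≤ (K'.degree x' : ℝ) := by
      intro x' hx
      have h1 : (A.filter (H.Adj ↑x')) ⊆ (K'.neighborFinset x').image Subtype.val := by
        intro y hy
        have hyW : y ∈ Wf := hnbW ↑x' hx y hy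
        refine Finset.mem_image.2 ⟨⟨y, hyW⟩, ?_, rfl⟩
        rw [SimpleGraph.mem_neighborFinset]
        exact (Finset.mem_filter.1 hy).2
      have h2 := Finset.card_le_card h1
      rw [Finset.card_image_of_injective _ Subtype.val_injective] at h2
      calc δ ≤ ((A.filter (H.Adj ↑x')).card : ℝ) := hmindeg ↑x' (hSA _ hx)
      _ ≤ ((K'.neighborFinset x').card : ℝ) := by exact_mod_cast h2
      _ = (K'.degree x' : ℝ) := by rw [SimpleGraph.card_neighborFinset_eq_degree]
    set SW : Finset ↑(↑Wf : Set V) := Finset.univ.filter (fun x => ↑x ∈ S) with hSWdef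
    have hSWcard : SW.card = n := by
      have himg : SW.image Subtype.val = S := by
        ext b
        constructor
        · intro hb
          obtain ⟨a, ha, rfl⟩ := Finset.mem_image.1 hb
          rw [hSWdef, Finset.mem_filter] at ha
          exact ha.2
        · intro hb
          have hbW : b ∈ Wf := Finset.mem_union_left _ hb
          exact Finset.mem_image.2 ⟨⟨b, hbW⟩,
            by rw [hSWdef, Finset.mem_filter]; exact ⟨Finset.mem_univ _, hb⟩, rfl⟩
      rw [← hScard, ← himg, Finset.card_image_of_injective _ Subtype.val_injective]
    have hsum1 : δ * (n : ℝ) ≤ ∑ x ∈ SW, (K'.degree x : ℝ) := by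
      have := Finset.card_nsmul_le_sum SW (fun x => (K'.degree x : ℝ)) δ
        (fun x hx => hdeg x (by rw [hSWdef, Finset.mem_filter] at hx; exact hx.2))
      rw [hSWcard] at this
      simpa [nsmul_eq_mul, mul_comm] using this
    have hsum2 : ∑ x ∈ SW, (K'.degree x : ℝ) ≤ ∑ x : ↑(↑Wf : Set V), (K'.degree x : ℝ) :=
      Finset.sum_le_sum_of_subset_of_nonneg (Finset.subset_univ SW)
        (fun i _ _ => by positivity)
    have hsum3 : ∑ x : ↑(↑Wf : Set V), (K'.degree x : ℝ) = 2 * (K'.edgeFinset.card : ℝ) := by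
      have := SimpleGraph.sum_degrees_eq_twice_card_edges K'
      exact_mod_cast congrArg (Nat.cast : ℕ → ℝ) this
    have hedge : K'.edgeFinset.card ≤ (F Wf).card := by
      apply Finset.card_le_card_of_injOn (Sym2.map Subtype.val)
      · intro e he
        rw [Finset.mem_coe, SimpleGraph.mem_edgeFinset] at he
        induction e using Sym2.ind with
        | _ a b =>
          have hadj : H.Adj ↑a ↑b := he
          simp only [Finset.mem_coe, hFdef, Finset.mem_filter, Finset.mem_univ, true_and, Sym2.map_pair_eq]
          refine ⟨H.mem_edgeSet.mpr hadj, ?_⟩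
          intro x hx
          rw [Sym2.mem_iff] at hx
          rcases hx with rfl | rfl
          · exact a.2
          · exact b.2
      · intro e1 _ e2 _ h
        exact Sym2.map.injective Subtype.val_injective h
    have hWsp : ((F Wf).card : ℝ) ≤ d / (8*r) * (Wf.card : ℝ) := by
      have h2n : (((↑Wf : Set V)).ncard : ℝ) ≤ 2*(n:ℝ) := by
        rw [Set.ncard_coe_finset]; linarith
      have := hsparse ↑Wf h2n
      rw [Set.ncard_coe_finset] at this
      exact (hFG Wf).trans this
    -- combine
    have hchain : δ * (n : ℝ) ≤ 2 * (d / (8*r)) * (Wf.card : ℝ) := by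
      have he : (K'.edgeFinset.card : ℝ) ≤ ((F Wf).card : ℝ) := by exact_mod_cast hedge
      calc δ * (n:ℝ) ≤ ∑ x ∈ SW, (K'.degree x : ℝ) := hsum1
      _ ≤ ∑ x : ↑(↑Wf : Set V), (K'.degree x : ℝ) := hsum2
      _ = 2 * (K'.edgeFinset.card : ℝ) := hsum3
      _ ≤ 2 * ((F Wf).card : ℝ) := by linarith
      _ ≤ 2 * (d / (8*r) * (Wf.card : ℝ)) := by linarith
      _ = 2 * (d / (8*r)) * (Wf.card : ℝ) := by ring
    have h2r : (0:ℝ) < 2*r := by positivity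
    have h8r : (0:ℝ) < 8*r := by positivity
    rw [hδdef] at hchain
    have hWnn : (0:ℝ) ≤ (Wf.card : ℝ) := Nat.cast_nonneg _
    have hkey : d / (2*r) * (n:ℝ) ≤ 2 * (d / (8*r)) * (2*(n:ℝ) - 1) := by
      have hmono : 2 * (d / (8*r)) * (Wf.card : ℝ) ≤ 2 * (d / (8*r)) * (2*(n:ℝ) - 1) := by
        apply mul_le_mul_of_nonneg_left hWcard
        positivity
      linarith
    have hnpos : (0:ℝ) < n := by exact_mod_cast hn0
    exact arith_final d r n hd hr hnpos hkey
  -- run DFS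
  obtain ⟨v0⟩ : Nonempty ↑(↑A : Set V) := by
    rw [← Fintype.card_pos_iff]; omega
  have hdfs := dfs_aux K n hn0 hcardn (2 * Fintype.card ↑(↑A : Set V) + 1) ∅ v0 v0
    SimpleGraph.Walk.nil (by
      have := Finset.card_le_univ (Finset.univ \ ((∅ : Finset ↑(↑A : Set V)) ∪
        (SimpleGraph.Walk.nil : K.Walk v0 v0).support.toFinset))
      simp only [SimpleGraph.Walk.length_nil, Finset.card_univ]
      omega)
    SimpleGraph.Walk.IsPath.nil (by simp) hn0 (by simpa using hn0) (by simp)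
  rcases hdfs with ⟨a, b, q, hq, hqlen⟩ | ⟨S', hS'card, hS'nb⟩
  · refine ⟨_, _, q.map (SimpleGraph.Embedding.induce (G := H) (↑A : Set V)).toHom, ?_, ?_⟩
    · exact q.map_isPath_of_injective (SimpleGraph.Embedding.induce (G := H) (↑A : Set V)).injective hq
    · rw [SimpleGraph.Walk.length_map]; exact hqlen
  · exact absurd hS'nb (hexp S' hS'card)
end

section
/- There exists an absolute constant C₀ > 0 such that for every integer r ≥ 2 there is an n₀ with the following property: for every n ≥ n₀ there exists a graph G with at most C₀·r²·(log r)·n edges such that every coloring of the edges of G with r colors yields a monochromatic path on n vertices (i.e., there is a path with n vertices all of whose edges receive the same color). In other words, the r-color size Ramsey number of the path P_n satisfies R̂(P_n, r) ≤ C₀ r² (log r) n. -/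
open scoped Classical

/-
Take a graph `G` on `N = 6912 r n` vertices with `m = 16 d r N` edges, `d = ⌈8 log r⌉`, in which
every set `A` of at most `4n` vertices spans fewer than `d |A|` edges; it exists by a first-moment
count over all `m`-edge graphs on `N` vertices. In an `r`-colouring some colour class has more than
`8 d N` edges, hence a nonempty subgraph of minimum degree at least `8 d`. Local sparseness makes
this subgraph expand: each set `U` of at most `n` of its vertices has at least `3 |U|` neighbours
outside `U`. By Pósa's rotation lemma a longest path of the subgraph then has at least `4 n`
vertices, and its first `n` vertices form a monochromatic `P_n`.
-/

open Finset

theorem Nat.cast_choose_le_three_mul_div_pow (x k : ℕ) : (x.choose k : ℝ) ≤ (3 * x / k) ^ k := by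
  rcases k.eq_zero_or_pos with rfl | hk
  · simp
  have hfact : (k : ℝ) ^ k / k.factorial ≤ 3 ^ k := by
    refine (Real.pow_div_factorial_le_exp _ (by positivity) k).trans ?_
    rw [← Real.exp_one_pow]
    gcongr
    exact Real.exp_one_lt_d9.le.trans (by norm_num)
  calc (x.choose k : ℝ) ≤ x ^ k / k.factorial := Nat.choose_le_pow_div k x
    _ = (x / k) ^ k * (k ^ k / k.factorial) := by
      rw [div_pow, mul_div_assoc', div_mul_cancel₀]; positivity
    _ ≤ (x / k) ^ k * 3 ^ k := by gcongr
    _ = (3 * x / k) ^ k := by rw [← mul_pow]; ring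

theorem cast_choose_mul_choose_mul_pow_le (N a d : ℕ) {p : ℝ} (hp : 0 ≤ p) :
    (N.choose a * (a ^ 2).choose (d * a) : ℝ) * p ^ (d * a)
      ≤ (3 * N / a * (3 * a * p / d) ^ d) ^ a := by
  calc (N.choose a * (a ^ 2).choose (d * a) : ℝ) * p ^ (d * a)
      ≤ (3 * N / a) ^ a * (3 * ((a ^ 2 : ℕ) : ℝ) / (d * a : ℕ)) ^ (d * a) * p ^ (d * a) := by
        gcongr
        · exact Nat.cast_choose_le_three_mul_div_pow N a
        · exact Nat.cast_choose_le_three_mul_div_pow (a ^ 2) (d * a)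
    _ = (3 * N / a * (3 * a * p / d) ^ d) ^ a := by
        have : 3 * ((a ^ 2 : ℕ) : ℝ) / (d * a : ℕ) * p = 3 * a * p / d := by
          push_cast
          field_simp
        rw [mul_assoc, ← mul_pow, this, pow_mul, ← mul_pow]

/-- The probability that a uniformly random `m`-subset of an `M`-set contains a given `b`-set
is at most `(m / M) ^ b`. -/
theorem Nat.cast_choose_sub_le_div_pow_mul_choose (M m b : ℕ) (hbm : b ≤ m) (hmM : m ≤ M) :
    ((M - b).choose (m - b) : ℝ) ≤ ((m : ℝ) / M) ^ b * M.choose m := by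
  induction b with
  | zero => simp
  | succ b ih =>
    have key := Nat.add_one_mul_choose_eq (M - b - 1) (m - b - 1)
    rw [show M - b - 1 + 1 = M - b by omega, show m - b - 1 + 1 = m - b by omega] at key
    rw [show M - (b + 1) = M - b - 1 by omega, show m - (b + 1) = m - b - 1 by omega]
    have hMb : (0 : ℝ) < (M - b : ℕ) := by exact_mod_cast (by omega : 0 < M - b)
    have hratio : ((m - b : ℕ) : ℝ) / (M - b : ℕ) ≤ m / M := by
      rw [div_le_div_iff₀ hMb (by exact_mod_cast (by omega : 0 < M)), Nat.cast_sub (by omega),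
        Nat.cast_sub (by omega)]
      have : (m : ℝ) * b ≤ M * b := by gcongr
      nlinarith
    calc ((M - b - 1).choose (m - b - 1) : ℝ)
        = (M - b).choose (m - b) * (((m - b : ℕ) : ℝ) / (M - b : ℕ)) := by
          rw [mul_div_assoc', eq_div_iff hMb.ne', mul_comm]
          exact_mod_cast key
      _ ≤ ((m : ℝ) / M) ^ b * M.choose m * (m / M) := by
          gcongr
          exact ih (by omega)
      _ = ((m : ℝ) / M) ^ (b + 1) * M.choose m := by ring

theorem Finset.card_filter_subset_powersetCard {α : Type*} (Ω B : Finset α) (m : ℕ)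
    (hBΩ : B ⊆ Ω) (hBm : #B ≤ m) :
    #{E ∈ Ω.powersetCard m | B ⊆ E} = (#Ω - #B).choose (m - #B) := by
  rw [← card_sdiff_of_subset hBΩ, ← card_powersetCard]
  refine card_nbij' (· \ B) (· ∪ B) ?_ ?_ ?_ ?_ <;> intro E hE <;> simp at hE ⊢ <;>
    grind [card_union_of_disjoint, subset_sdiff]

/-- Union bound over `A` and over `d a` of the at most `a ^ 2` pairs inside `A`. -/
theorem card_filter_exists_dense_le {V : Type*} [Fintype V] (Ω : Finset (Sym2 V)) {m d a : ℕ}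
    (hdam : d * a ≤ m) :
    #{E ∈ Ω.powersetCard m | ∃ A : Finset V, #A = a ∧ d * a ≤ #(E ∩ A.sym2)} ≤
      (Fintype.card V).choose a * ((a ^ 2).choose (d * a) * (#Ω - d * a).choose (m - d * a)) := by
  calc _ ≤ #((univ.powersetCard a).biUnion fun A => ((Ω ∩ A.sym2).powersetCard (d * a)).biUnion
            fun B => {E ∈ Ω.powersetCard m | B ⊆ E}) := by
        refine card_le_card fun E hE => ?_
        obtain ⟨hEm, A, hA, hdense⟩ := mem_filter.mp hE
        obtain ⟨B, hBE, hB⟩ := exists_subset_card_eq hdense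
        simp only [mem_biUnion, mem_powersetCard, mem_filter]
        exact ⟨A, ⟨subset_univ A, hA⟩, B,
          ⟨hBE.trans (inter_subset_inter (mem_powersetCard.mp hEm).1 subset_rfl), hB⟩,
          mem_powersetCard.mp hEm, hBE.trans inter_subset_left⟩
    _ ≤ ∑ A ∈ univ.powersetCard a, ∑ B ∈ (Ω ∩ A.sym2).powersetCard (d * a),
          #{E ∈ Ω.powersetCard m | B ⊆ E} :=
        card_biUnion_le.trans (sum_le_sum fun _ _ => card_biUnion_le)
    _ ≤ ∑ A ∈ univ.powersetCard a, (a ^ 2).choose (d * a) * (#Ω - d * a).choose (m - d * a) := by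
        refine sum_le_sum fun A hA => ?_
        have hterm : ∀ B ∈ (Ω ∩ A.sym2).powersetCard (d * a),
            #{E ∈ Ω.powersetCard m | B ⊆ E} = (#Ω - d * a).choose (m - d * a) := fun B hB => by
          obtain ⟨hBΩ, hB⟩ := mem_powersetCard.mp hB
          rw [← hB]
          convert card_filter_subset_powersetCard Ω B m (hBΩ.trans inter_subset_left) (hB ▸ hdam)
        have hcard : #(Ω ∩ A.sym2) ≤ a ^ 2 := calc
          #(Ω ∩ A.sym2) ≤ #A.sym2 := card_le_card inter_subset_right
          _ = (a + 1).choose 2 := by rw [card_sym2, (mem_powersetCard.mp hA).2]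
          _ ≤ a ^ 2 := by
            rw [Nat.choose_two_right]
            exact Nat.div_le_of_le_mul (by simp only [Nat.add_sub_cancel]; nlinarith)
        rw [sum_congr rfl hterm, sum_const, card_powersetCard, smul_eq_mul]
        exact Nat.mul_le_mul_right _ (Nat.choose_le_choose _ hcard)
    _ = _ := by rw [sum_const, card_powersetCard, card_univ, smul_eq_mul]

namespace SimpleGraph

variable {V : Type*}

def restrict (G : SimpleGraph V) (W : Finset V) : SimpleGraph V where
  Adj u v := G.Adj u v ∧ u ∈ W ∧ v ∈ W
  symm := ⟨fun _ _ h => ⟨h.1.symm, h.2.2, h.2.1⟩⟩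
  loopless := ⟨fun v h => G.loopless.irrefl v h.1⟩

theorem restrict_le (G : SimpleGraph V) (W : Finset V) : G.restrict W ≤ G := fun _ _ h => h.1

theorem support_restrict_subset (G : SimpleGraph V) (W : Finset V) :
    (G.restrict W).support ⊆ W := fun _ ⟨_, h⟩ => h.2.1

theorem restrict_univ [Fintype V] (G : SimpleGraph V) : G.restrict univ = G := by
  ext; simp [restrict]

theorem restrict_erase (G : SimpleGraph V) (W : Finset V) (v : V) :
    G.restrict (W.erase v) = (G.restrict W).deleteIncidenceSet v := by
  ext; simp [restrict, deleteIncidenceSet_adj]; tauto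

theorem degree_restrict_of_forall_adj_mem [Fintype V] (G : SimpleGraph V) {W : Finset V} {v : V}
    (hv : v ∈ W) (h : ∀ w, G.Adj v w → w ∈ W) : (G.restrict W).degree v = G.degree v := by
  simp only [← card_neighborFinset_eq_degree]
  congr 1
  ext w
  rw [mem_neighborFinset, mem_neighborFinset]
  exact ⟨fun h' => h'.1, fun h' => ⟨h', hv, h w h'⟩⟩

theorem sum_degree_le_two_mul_card_edgeFinset_restrict [Fintype V] (G : SimpleGraph V)
    {U W : Finset V} (hUW : U ⊆ W) (h : ∀ v ∈ U, ∀ w, G.Adj v w → w ∈ W) :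
    ∑ v ∈ U, G.degree v ≤ 2 * #(G.restrict W).edgeFinset := calc
  ∑ v ∈ U, G.degree v = ∑ v ∈ U, (G.restrict W).degree v :=
    sum_congr rfl fun v hv => (G.degree_restrict_of_forall_adj_mem (hUW hv) (h v hv)).symm
  _ ≤ ∑ v, (G.restrict W).degree v := sum_le_sum_of_subset (subset_univ _)
  _ = 2 * #(G.restrict W).edgeFinset := sum_degrees_eq_twice_card_edges _

/-- Deleting vertices of degree at most `δ` one at a time keeps the invariant `δ |W| < e(W)`. -/
theorem exists_nonempty_forall_lt_degree_restrict [Fintype V] (G : SimpleGraph V) (δ : ℕ)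
    (h : δ * Fintype.card V < #G.edgeFinset) :
    ∃ W : Finset V, W.Nonempty ∧ ∀ v ∈ W, δ < (G.restrict W).degree v := by
  suffices ∀ W : Finset V, δ * #W < #(G.restrict W).edgeFinset →
      ∃ W' : Finset V, W'.Nonempty ∧ ∀ v ∈ W', δ < (G.restrict W').degree v from
    this univ (by convert h using 2 <;> simp [restrict_univ])
  intro W
  induction W using Finset.strongInduction with
  | H W ih =>
    intro hW
    by_cases hdeg : ∀ v ∈ W, δ < (G.restrict W).degree v
    · obtain ⟨e, he⟩ := card_pos.mp (Nat.zero_lt_of_lt hW)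
      induction e using Sym2.ind with
      | h a b => exact ⟨W, ⟨a, (mem_edgeFinset.mp he).2.1⟩, hdeg⟩
    · push Not at hdeg
      obtain ⟨v, hv, hvdeg⟩ := hdeg
      refine ih _ (erase_ssubset hv) ?_
      have hedges : #(G.restrict (W.erase v)).edgeFinset
          = #(G.restrict W).edgeFinset - (G.restrict W).degree v := by
        rw [restrict_erase]
        convert card_edgeFinset_deleteIncidenceSet (G.restrict W) v
      rw [card_erase_of_mem hv, hedges, Nat.mul_sub_one]
      have := Nat.le_mul_of_pos_right δ (card_pos.mpr ⟨v, hv⟩)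
      omega

def IsLocallySparse [Fintype V] (G : SimpleGraph V) (s d : ℕ) : Prop :=
  ∀ A : Finset V, A.Nonempty → #A ≤ s → #(G.edgeFinset ∩ A.sym2) < d * #A

/-- The `Fintype` instance is an implicit argument, so that the lemma rewrites under any of them. -/
theorem edgeFinset_fromEdgeSet_of_subset [Fintype V] {E : Finset (Sym2 V)}
    (hE : E ⊆ (⊤ : SimpleGraph V).edgeFinset)
    {_ : Fintype (fromEdgeSet (E : Set (Sym2 V))).edgeSet} :
    (fromEdgeSet (E : Set (Sym2 V))).edgeFinset = E := by
  ext e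
  simp only [mem_edgeFinset, edgeSet_fromEdgeSet, Set.mem_sdiff, mem_coe, and_iff_left_iff_imp]
  intro he
  simpa using hE he

/-- First-moment count over the `m`-edge graphs on `V`: the summand for `a` bounds the fraction
of them in which some `a` vertices span at least `d a` edges. -/
theorem exists_isLocallySparse [Fintype V] {m s d : ℕ} (hm : m ≤ (Fintype.card V).choose 2)
    (hds : d * s ≤ m)
    (hsum : ∑ a ∈ Icc 1 s, ((Fintype.card V).choose a * (a ^ 2).choose (d * a) : ℝ) *
      ((m : ℝ) / (Fintype.card V).choose 2) ^ (d * a) < 1) :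
    ∃ G : SimpleGraph V, #G.edgeFinset = m ∧ G.IsLocallySparse s d := by
  set N := Fintype.card V
  set M := N.choose 2
  set Ω := (⊤ : SimpleGraph V).edgeFinset
  have hΩ : #Ω = M := card_edgeFinset_top_eq_card_choose_two
  set bad := fun a => {E ∈ Ω.powersetCard m | ∃ A : Finset V, #A = a ∧ d * a ≤ #(E ∩ A.sym2)}
  have hbad : #((Icc 1 s).biUnion bad) < #(Ω.powersetCard m) := by
    have hC : (0 : ℝ) < M.choose m := by exact_mod_cast Nat.choose_pos hm
    rw [card_powersetCard, hΩ]
    suffices (#((Icc 1 s).biUnion bad) : ℝ) < M.choose m by exact_mod_cast this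
    calc (#((Icc 1 s).biUnion bad) : ℝ) ≤ ∑ a ∈ Icc 1 s, (#(bad a) : ℝ) := by
          exact_mod_cast card_biUnion_le
      _ ≤ ∑ a ∈ Icc 1 s, (N.choose a * (a ^ 2).choose (d * a) : ℝ) *
            ((m : ℝ) / M) ^ (d * a) * M.choose m := by
          refine sum_le_sum fun a ha => ?_
          have hda : d * a ≤ m := (Nat.mul_le_mul_left d (mem_Icc.mp ha).2).trans hds
          have := card_filter_exists_dense_le Ω hda
          rw [hΩ] at this
          calc (#(bad a) : ℝ)
              ≤ N.choose a * ((a ^ 2).choose (d * a) * (M - d * a).choose (m - d * a)) := by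
                exact_mod_cast this
            _ ≤ N.choose a * ((a ^ 2).choose (d * a) * (((m : ℝ) / M) ^ (d * a) * M.choose m)) := by
                gcongr
                exact Nat.cast_choose_sub_le_div_pow_mul_choose _ _ _ hda hm
            _ = _ := by ring
      _ = (∑ a ∈ Icc 1 s, (N.choose a * (a ^ 2).choose (d * a) : ℝ) *
            ((m : ℝ) / M) ^ (d * a)) * M.choose m := by rw [sum_mul]
      _ < 1 * M.choose m := by gcongr
      _ = M.choose m := one_mul _
  obtain ⟨E, hE, hEbad⟩ := exists_mem_notMem_of_card_lt_card hbad
  obtain ⟨hEΩ, hEm⟩ := mem_powersetCard.mp hE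
  refine ⟨fromEdgeSet E, by rw [edgeFinset_fromEdgeSet_of_subset hEΩ, hEm], fun A hA hAs => ?_⟩
  by_contra! h
  exact hEbad (mem_biUnion.mpr ⟨#A, mem_Icc.mpr ⟨card_pos.mpr hA, hAs⟩,
    mem_filter.mpr ⟨hE, A, rfl, by rwa [edgeFinset_fromEdgeSet_of_subset hEΩ] at h⟩⟩)

namespace Walk

variable {G : SimpleGraph V}

noncomputable def edgesAt {u w : V} (p : G.Walk u w) (v : V) : Finset (Sym2 V) :=
  {e ∈ p.edges.toFinset | v ∈ e}

theorem IsPath.card_edgesAt {u w v : V} {p : G.Walk u w} (hp : p.IsPath) (hv : v ∈ p.support) :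
    #(p.edgesAt v) = (if v = u then 0 else 1) + (if v = w then 0 else 1) := by
  induction p with
  | nil => simp_all [edgesAt]
  | @cons a b c h q ih =>
    rw [cons_isPath_iff] at hp
    have hab : s(a, b) ∉ q.edges := fun he => hp.2 (q.fst_mem_support_of_mem_edges he)
    have hac : a ≠ c := fun hac => hp.2 (hac ▸ q.end_mem_support)
    simp only [edgesAt, edges_cons, List.toFinset_cons, filter_insert] at ih ⊢
    by_cases hva : v = a
    · subst hva
      have hempty : {e ∈ q.edges.toFinset | v ∈ e} = ∅ :=
        filter_eq_empty_iff.mpr fun e he hve =>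
          hp.2 (mem_support_of_mem_edges (List.mem_toFinset.mp he) hve)
      simp [hempty, hac]
    · have hvq : v ∈ q.support := by simpa [hva] using hv
      by_cases hvb : v = b
      · subst hvb
        rw [if_pos (Sym2.mem_mk_right a v), card_insert_of_notMem (by simpa using hab),
          ih hp.1 hvq]
        simp [hva, add_comm]
      · rw [if_neg (by simp [hva, hvb]), ih hp.1 hvq]
        simp [hva, hvb]

theorem IsPath.card_edgesAt_le_two {u w : V} {p : G.Walk u w} (hp : p.IsPath) (v : V) :
    #(p.edgesAt v) ≤ 2 := by
  by_cases hv : v ∈ p.support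
  · rw [hp.card_edgesAt hv]
    split_ifs <;> omega
  · rw [edgesAt, card_eq_zero.mpr (filter_eq_empty_iff.mpr fun e he hve =>
      hv (mem_support_of_mem_edges (List.mem_toFinset.mp he) hve))]
    omega

theorem IsPath.ncard_setOf_mem_edges_le [Finite V] {u w : V} {p : G.Walk u w} (hp : p.IsPath)
    (R : Set V) : {v | ∃ z ∈ R, s(v, z) ∈ p.edges}.ncard ≤ 2 * R.ncard := by
  have := Fintype.ofFinite V
  have hfiber (z : V) : #{v | s(v, z) ∈ p.edges} ≤ 2 := by
    refine (card_le_card_of_injOn (fun v => s(v, z)) (t := p.edgesAt z) ?_ ?_).trans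
      (hp.card_edgesAt_le_two z)
    · intro v hv
      exact mem_filter.mpr ⟨List.mem_toFinset.mpr (mem_filter.mp hv).2, Sym2.mem_mk_right _ _⟩
    · intro v _ v' _ h
      exact Sym2.congr_left.mp h
  calc {v | ∃ z ∈ R, s(v, z) ∈ p.edges}.ncard
      = #(R.toFinset.biUnion fun z => {v | s(v, z) ∈ p.edges}) := by
        rw [← Set.ncard_coe_finset]; congr; ext; simp
    _ ≤ ∑ z ∈ R.toFinset, #{v | s(v, z) ∈ p.edges} := card_biUnion_le
    _ ≤ ∑ _z ∈ R.toFinset, 2 := sum_le_sum fun z _ => hfiber z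
    _ = 2 * R.ncard := by rw [sum_const, smul_eq_mul, Set.ncard_eq_toFinset_card', mul_comm]

theorem IsPath.mem_support_of_adj_of_forall_length_le {u y v : V} {Q : G.Walk u y}
    (hQ : Q.IsPath) (hmax : ∀ (a b : V) (q : G.Walk a b), q.IsPath → q.length ≤ Q.length)
    (hadj : G.Adj y v) : v ∈ Q.support := by
  by_contra hv
  simpa using hmax _ _ _ (hQ.concat hv hadj)

/-- Pósa rotations with fixed start `u`: a path `Q₁ v s Q₂` ending at `y` with `v ~ y` is
rotated to `Q₁ v y Q₂⁻¹`, which ends at `s`. -/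
inductive Rotates {u x : V} (P : G.Walk u x) : ∀ {y : V}, G.Walk u y → Prop
  | refl : Rotates P P
  | rotate {v s y : V} (Q₁ : G.Walk u v) (hs : G.Adj v s) (Q₂ : G.Walk s y) (hy : G.Adj v y) :
      Rotates P (Q₁.append (cons hs Q₂)) → Rotates P (Q₁.append (cons hy Q₂.reverse))

def rotationEnds {u x : V} (P : G.Walk u x) : Set V :=
  {y | ∃ Q : G.Walk u y, Rotates P Q}

section Rotation

variable {u x y : V} {P : G.Walk u x} {Q : G.Walk u y}

theorem Rotates.support_perm (h : Rotates P Q) : Q.support.Perm P.support := by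
  induction h with
  | refl => rfl
  | rotate Q₁ hs Q₂ hy _ ih =>
    simp only [support_append, support_cons, List.tail_cons, support_reverse] at ih ⊢
    exact (Q₂.support.reverse_perm.append_left _).trans ih

theorem Rotates.isPath (hP : P.IsPath) (h : Rotates P Q) : Q.IsPath :=
  IsPath.mk' (h.support_perm.nodup_iff.mpr hP.support_nodup)

theorem Rotates.length_eq (h : Rotates P Q) : Q.length = P.length := by
  simpa [length_support] using h.support_perm.length_eq

theorem Rotates.mem_rotationEnds (h : Rotates P Q) : y ∈ P.rotationEnds := ⟨Q, h⟩

theorem Rotates.mem_edges (h : Rotates P Q) {e : Sym2 V} (he : e ∈ P.edges)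
    (hR : ∀ z ∈ e, z ∉ P.rotationEnds) : e ∈ Q.edges := by
  induction h with
  | refl => exact he
  | rotate Q₁ hs Q₂ hy hQ ih =>
    simp only [edges_append, edges_cons, edges_reverse, List.mem_append, List.mem_cons,
      List.mem_reverse] at ih ⊢
    rcases ih with h₁ | rfl | h₂
    · exact .inl h₁
    · exact absurd (Rotates.rotate Q₁ hs Q₂ hy hQ).mem_rotationEnds (hR _ (Sym2.mem_mk_right _ _))
    · exact .inr (.inr h₂)

theorem Rotates.exists_rotate (h : Rotates P Q) {v : V} (hv : v ∈ Q.support) (hvy : v ≠ y)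
    (hadj : G.Adj y v) : ∃ s ∈ P.rotationEnds, s(v, s) ∈ Q.edges := by
  obtain ⟨s, hs, Q₂, hQ₂⟩ := exists_eq_cons_of_ne hvy (Q.dropUntil v hv)
  have hspec := Q.take_spec hv
  rw [hQ₂] at hspec
  refine ⟨s, ?_, ?_⟩
  · rw [← hspec] at h
    exact (Rotates.rotate _ hs Q₂ hadj.symm h).mem_rotationEnds
  · rw [← hspec]
    simp

theorem mem_support_of_adj_rotationEnds (hP : P.IsPath)
    (hmax : ∀ (a b : V) (q : G.Walk a b), q.IsPath → q.length ≤ P.length) {z v : V}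
    (hz : z ∈ P.rotationEnds) (hadj : G.Adj z v) : v ∈ P.support := by
  obtain ⟨Q, hQ⟩ := hz
  refine hQ.support_perm.mem_iff.mp ((hQ.isPath hP).mem_support_of_adj_of_forall_length_le ?_ hadj)
  simpa [hQ.length_eq] using hmax

/-- Rotating at `v` makes the successor of `v` on `Q` a rotation endpoint. If no neighbour of `v`
on `P` were one, all edges of `P` at `v` would survive in `Q`, giving `v` one edge too many. -/
theorem exists_mem_edges_of_mem_extNb_rotationEnds (hP : P.IsPath)
    (hmax : ∀ (a b : V) (q : G.Walk a b), q.IsPath → q.length ≤ P.length) {v : V}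
    (hv : v ∈ G.extNb P.rotationEnds) : ∃ z ∈ P.rotationEnds, s(v, z) ∈ P.edges := by
  obtain ⟨hvR, y, ⟨Q, hQ⟩, hyv⟩ := hv
  have hvP := mem_support_of_adj_rotationEnds hP hmax ⟨Q, hQ⟩ hyv
  have hvQ := hQ.support_perm.mem_iff.mpr hvP
  obtain ⟨s, hsR, hvs⟩ :=
    hQ.exists_rotate hvQ (ne_of_mem_of_not_mem hQ.mem_rotationEnds hvR).symm hyv
  by_contra! hcon
  have hsub : P.edgesAt v ⊆ Q.edgesAt v := by
    intro e he
    obtain ⟨heP, hve⟩ := mem_filter.mp he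
    obtain ⟨z, rfl⟩ := Sym2.mem_iff_exists.mp hve
    have hz : z ∉ P.rotationEnds := fun hz => hcon z hz (List.mem_toFinset.mp heP)
    refine mem_filter.mpr ⟨List.mem_toFinset.mpr (hQ.mem_edges (List.mem_toFinset.mp heP) ?_), hve⟩
    intro t ht
    rcases Sym2.mem_iff.mp ht with rfl | rfl
    exacts [hvR, hz]
  have hnew : s(v, s) ∈ Q.edgesAt v \ P.edgesAt v :=
    mem_sdiff.mpr ⟨mem_filter.mpr ⟨List.mem_toFinset.mpr hvs, Sym2.mem_mk_left _ _⟩,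
      fun h => hcon s hsR (List.mem_toFinset.mp (mem_filter.mp h).1)⟩
  have hcard : #(Q.edgesAt v) = #(P.edgesAt v) := by
    rw [(hQ.isPath hP).card_edgesAt hvQ, hP.card_edgesAt hvP,
      if_neg (ne_of_mem_of_not_mem hQ.mem_rotationEnds hvR).symm,
      if_neg (ne_of_mem_of_not_mem (Rotates.refl (P := P)).mem_rotationEnds hvR).symm]
  exact (card_lt_card ((ssubset_iff_of_subset hsub).mpr ⟨_, (mem_sdiff.mp hnew).1,
    (mem_sdiff.mp hnew).2⟩)).ne' hcard

theorem ncard_extNb_rotationEnds_le [Finite V] (hP : P.IsPath)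
    (hmax : ∀ (a b : V) (q : G.Walk a b), q.IsPath → q.length ≤ P.length) :
    (G.extNb P.rotationEnds).ncard ≤ 2 * P.rotationEnds.ncard :=
  (Set.ncard_le_ncard fun _ hv => exists_mem_edges_of_mem_extNb_rotationEnds hP hmax hv).trans
    (hP.ncard_setOf_mem_edges_le _)

end Rotation

end Walk

/-- Pósa's lemma: the endpoints `R` of rotations of a longest path satisfy `|N(R)| ≤ 2|R|`, so
expansion by a factor `3` forces `|R| > k`; then `k` of them together with their neighbourhood,
at least `4k` vertices, lie on that path. -/
theorem exists_isPath_four_mul_le_length_support [Fintype V] (G : SimpleGraph V) {a b : V}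
    (hab : G.Adj a b) (k : ℕ)
    (hexp : ∀ U ⊆ G.support, U.ncard ≤ k → 3 * U.ncard ≤ (G.extNb U).ncard) :
    ∃ (u w : V) (p : G.Walk u w), p.IsPath ∧ 4 * k ≤ p.support.length := by
  have : Nonempty V := ⟨a⟩
  obtain ⟨u, w, P, hP, hmax⟩ := Walk.exists_isPath_forall_isPath_length_le_length G
  have hPnil : ¬ P.Nil := fun hnil => by
    simpa [hnil.length_eq_zero] using hmax _ _ _ (Walk.IsPath.of_adj hab)
  have hwR : w ∈ P.rotationEnds := Walk.Rotates.refl.mem_rotationEnds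
  have hRP : P.rotationEnds ⊆ {v | v ∈ P.support} := fun _ ⟨Q, hQ⟩ =>
    hQ.support_perm.mem_iff.mp Q.end_mem_support
  have hRG : P.rotationEnds ⊆ G.support := fun y hy => by
    obtain ⟨e, he, hye⟩ := (Walk.mem_support_iff_exists_mem_edges_of_not_nil hPnil).mp (hRP hy)
    obtain ⟨z, rfl⟩ := Sym2.mem_iff_exists.mp hye
    exact ⟨z, P.adj_of_mem_edges he⟩
  have hkR : k < P.rotationEnds.ncard := by
    by_contra! h
    have := (hexp _ hRG h).trans (Walk.ncard_extNb_rotationEnds_le hP hmax)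
    have := (Set.ncard_pos (Set.toFinite _)).mpr ⟨w, hwR⟩
    omega
  obtain ⟨R₀, hR₀R, hR₀k⟩ := Set.exists_subset_card_eq hkR.le
  have hN : G.extNb R₀ ⊆ {v | v ∈ P.support} := fun _ ⟨_, _, hz, hzv⟩ =>
    Walk.mem_support_of_adj_rotationEnds hP hmax (hR₀R hz) hzv
  refine ⟨u, w, P, hP, ?_⟩
  calc 4 * k ≤ R₀.ncard + (G.extNb R₀).ncard := by
        have := hexp R₀ (hR₀R.trans hRG) hR₀k.le
        omega
    _ = (R₀ ∪ G.extNb R₀).ncard :=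
        (Set.ncard_union_eq (Set.disjoint_left.mpr fun _ hv hv' => hv'.1 hv)).symm
    _ ≤ {v | v ∈ P.support}.ncard := Set.ncard_le_ncard (Set.union_subset (hR₀R.trans hRP) hN)
    _ = P.support.length := by
        rw [show {v | v ∈ P.support} = (P.support.toFinset : Set V) by ext; simp,
          Set.ncard_coe_finset, List.toFinset_card_of_nodup hP.support_nodup]

/-- If `N(U)` were smaller than `c |U|`, then `U ∪ N(U)` would span at least `d (c + 1) |U|`
edges, the edges at `U`. -/
theorem IsLocallySparse.le_ncard_extNb [Fintype V] {G K : SimpleGraph V} {k c d : ℕ}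
    (hG : G.IsLocallySparse ((c + 1) * k) d) (hKG : K ≤ G) {U : Set V}
    (hdeg : ∀ v ∈ U, 2 * d * (c + 1) ≤ K.degree v) (hU : U.ncard ≤ k) :
    c * U.ncard ≤ (K.extNb U).ncard := by
  by_contra! hlt
  set A := (U ∪ K.extNb U).toFinset
  have hA : #A < (c + 1) * U.ncard := by
    rw [← Set.ncard_eq_toFinset_card']
    have := Set.ncard_union_le U (K.extNb U)
    linarith
  have hAne : A.Nonempty := by
    obtain ⟨u, hu⟩ := Set.nonempty_of_ncard_ne_zero (by rintro h; rw [h] at hA; omega)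
    exact ⟨u, Set.mem_toFinset.mpr (.inl hu)⟩
  have hsparse := hG A hAne (hA.le.trans (Nat.mul_le_mul_left _ hU))
  have hsub : (K.restrict A).edgeFinset ⊆ G.edgeFinset ∩ A.sym2 := by
    intro e he
    induction e using Sym2.ind with
    | h a b =>
      obtain ⟨hab, ha, hb⟩ := mem_edgeFinset.mp he
      exact mem_inter.mpr ⟨mem_edgeFinset.mpr (hKG hab), mk_mem_sym2_iff.mpr ⟨ha, hb⟩⟩
  have hdegU : ∑ v ∈ U.toFinset, K.degree v ≤ 2 * #(K.restrict A).edgeFinset := by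
    refine K.sum_degree_le_two_mul_card_edgeFinset_restrict (Set.toFinset_subset_toFinset.mpr
      Set.subset_union_left) fun v hv w hw => ?_
    rw [Set.mem_toFinset] at hv ⊢
    by_cases hwU : w ∈ U
    exacts [.inl hwU, .inr ⟨hwU, v, hv, hw⟩]
  refine lt_irrefl (2 * d * (c + 1) * U.ncard) ?_
  calc 2 * d * (c + 1) * U.ncard
      ≤ ∑ v ∈ U.toFinset, K.degree v := by
        rw [Set.ncard_eq_toFinset_card', mul_comm, ← smul_eq_mul]
        exact card_nsmul_le_sum _ _ _ fun v hv => hdeg v (Set.mem_toFinset.mp hv)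
    _ ≤ 2 * #(K.restrict A).edgeFinset := hdegU
    _ ≤ 2 * #(G.edgeFinset ∩ A.sym2) := Nat.mul_le_mul_left _ (card_le_card hsub)
    _ < 2 * (d * #A) := by omega
    _ ≤ 2 * (d * ((c + 1) * U.ncard)) := by gcongr
    _ = 2 * d * (c + 1) * U.ncard := by ring

theorem IsLocallySparse.exists_isPath [Fintype V] {G H : SimpleGraph V} {k d : ℕ}
    (hG : G.IsLocallySparse (4 * k) d) (hHG : H ≤ G)
    (hH : 8 * d * Fintype.card V < #H.edgeFinset) :
    ∃ (u w : V) (p : H.Walk u w), p.IsPath ∧ 4 * k ≤ p.support.length := by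
  obtain ⟨W, ⟨v, hv⟩, hdeg⟩ := H.exists_nonempty_forall_lt_degree_restrict _ hH
  obtain ⟨w, hvw⟩ := ((H.restrict W).degree_pos_iff_exists_adj v).mp (Nat.zero_lt_of_lt (hdeg v hv))
  obtain ⟨a, b, p, hp, hlen⟩ := (H.restrict W).exists_isPath_four_mul_le_length_support hvw k
    fun U hU hUk => hG.le_ncard_extNb (c := 3) ((restrict_le H W).trans hHG)
      (fun u hu => by have := hdeg u (support_restrict_subset H W (hU hu)); omega) hUk
  exact ⟨a, b, p.mapLe (restrict_le H W), hp.mapLe _, by simpa using hlen⟩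

theorem IsLocallySparse.exists_monochromatic_path [Fintype V] {G : SimpleGraph V} {n d r : ℕ}
    (hG : G.IsLocallySparse (4 * n) d) (hn : 1 ≤ n)
    (hE : r * (8 * d * Fintype.card V) < #G.edgeFinset) (f : Sym2 V → Fin r) :
    ∃ (u w : V) (p : G.Walk u w),
      p.IsPath ∧ p.length + 1 = n ∧ ∃ c : Fin r, ∀ e ∈ p.edges, f e = c := by
  obtain ⟨c, -, hc⟩ := exists_lt_card_fiber_of_mul_lt_card_of_maps_to (t := univ) (f := f)
    (fun _ _ => mem_univ _) (by rwa [card_univ, Fintype.card_fin])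
  obtain ⟨u, w, p, hp, hlen⟩ := hG.exists_isPath (H := G.deleteEdges {e | f e ≠ c})
    (deleteEdges_le _) (by convert hc using 2; ext e; simp [edgeSet_deleteEdges])
  refine ⟨u, _, (p.take (n - 1)).mapLe (deleteEdges_le _), (hp.take _).mapLe _, ?_, c,
    fun e he => ?_⟩
  · simp [p.length_support] at hlen ⊢
    omega
  · rw [Walk.edges_mapLe_eq_edges, Walk.edges_take] at he
    have he' := p.edges_subset_edgeSet (List.mem_of_mem_take he)
    rw [edgeSet_deleteEdges] at he'
    simpa using he'.2

end SimpleGraph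

theorem sum_Icc_one_third_pow_lt_one (s : ℕ) : ∑ a ∈ Icc 1 s, (1 / 3 : ℝ) ^ a < 1 := by
  rw [← Ico_add_one_right_eq_Icc]
  exact (geom_sum_Ico_le_of_lt_one (by norm_num) (by norm_num)).trans_lt (by norm_num)

theorem mul_le_nine_pow_ceil_log {r : ℕ} (hr : 2 ≤ r) : 15552 * r ≤ 9 ^ ⌈8 * Real.log r⌉₊ := by
  have hr' : (2 : ℝ) ≤ r := by exact_mod_cast hr
  have hexp2 : Real.exp 2 ≤ 9 := by
    rw [show (2 : ℝ) = 1 + 1 by norm_num, Real.exp_add]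
    nlinarith [Real.exp_one_lt_d9, Real.exp_pos 1]
  have : (15552 * r : ℝ) ≤ 9 ^ ⌈8 * Real.log r⌉₊ := calc
    (15552 * r : ℝ) ≤ r ^ 15 * r := by
        gcongr
        exact (by norm_num : (15552 : ℝ) ≤ 2 ^ 15).trans (pow_le_pow_left₀ (by norm_num) hr' 15)
    _ = Real.exp (16 * Real.log r) := by
        rw [show (16 : ℝ) = (16 : ℕ) by norm_num, Real.exp_nat_mul, Real.exp_log (by positivity)]
        ring
    _ ≤ Real.exp (2 * ⌈8 * Real.log r⌉₊) :=
        Real.exp_le_exp.mpr (by linarith [Nat.le_ceil (8 * Real.log r)])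
    _ = Real.exp 2 ^ ⌈8 * Real.log r⌉₊ := by rw [← Real.exp_nat_mul, mul_comm]
    _ ≤ 9 ^ ⌈8 * Real.log r⌉₊ := by gcongr
  exact_mod_cast this

theorem ceil_le_ten_mul_log {r : ℝ} (hr : 2 ≤ r) : (⌈8 * Real.log r⌉₊ : ℝ) ≤ 10 * Real.log r := by
  have hlog : 1 / 2 ≤ Real.log r :=
    (by linarith [Real.log_two_gt_d9] : (1 : ℝ) / 2 ≤ Real.log 2).trans
      (Real.log_le_log (by norm_num) hr)
  linarith [Nat.ceil_lt_add_one (by linarith : 0 ≤ 8 * Real.log r)]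

/-- With `N = 6912 r n` and `m = 16 d r N` we have `m / M ≤ 64 d r / N`, so `3 a (m / M) / d` is at
most `192 r a / N ≤ 1 / 9`. -/
theorem first_moment_summand_le {r n d a : ℕ} (hr : 1 ≤ r) (hd : 15552 * r ≤ 9 ^ d)
    (ha : 1 ≤ a) (han : a ≤ 4 * n) :
    ((6912 * r * n).choose a * (a ^ 2).choose (d * a) : ℝ) *
      (((16 * d * r * (6912 * r * n) : ℕ) : ℝ) / (6912 * r * n).choose 2) ^ (d * a)
      ≤ (1 / 3) ^ a := by
  obtain ⟨d, rfl⟩ : ∃ d', d = d' + 1 :=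
    Nat.exists_eq_add_one.mpr (Nat.pos_of_ne_zero fun h => by simp [h] at hd; omega)
  set N := 6912 * r * n
  have hNR : (N : ℝ) = 6912 * r * n := by simp [N]
  have hn : (1 : ℝ) ≤ n := by exact_mod_cast (by omega : 1 ≤ n)
  have hr' : (1 : ℝ) ≤ r := by exact_mod_cast hr
  have ha' : (1 : ℝ) ≤ a := by exact_mod_cast ha
  have hN : (2 : ℝ) ≤ N := by rw [hNR]; nlinarith
  have hp : ((16 * (d + 1) * r * N : ℕ) : ℝ) / N.choose 2 ≤ 64 * (d + 1) * r / N := by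
    rw [Nat.cast_choose_two, div_le_div_iff₀ (by nlinarith) (by linarith)]
    push_cast
    have : (0 : ℝ) ≤ (d + 1) * r * N := by positivity
    nlinarith
  have hy : 192 * r * a / N ≤ (1 / 9 : ℝ) := by
    rw [div_le_iff₀ (by linarith), hNR]
    have : (a : ℝ) ≤ 4 * n := by exact_mod_cast han
    nlinarith
  have hq : 3 * a * (((16 * (d + 1) * r * N : ℕ) : ℝ) / N.choose 2) / (d + 1 : ℕ)
      ≤ 192 * r * a / N := by
    rw [div_le_iff₀ (by positivity)]
    calc 3 * a * (((16 * (d + 1) * r * N : ℕ) : ℝ) / N.choose 2)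
        ≤ 3 * a * (64 * (d + 1) * r / N) := by gcongr
      _ = 192 * r * a / N * (d + 1 : ℕ) := by push_cast; ring
  refine (cast_choose_mul_choose_mul_pow_le N a (d + 1) (by positivity)).trans
    (pow_le_pow_left₀ (by positivity) ?_ a)
  calc 3 * N / a * (3 * a * (((16 * (d + 1) * r * N : ℕ) : ℝ) / N.choose 2) / (d + 1 : ℕ)) ^ (d + 1)
      ≤ 3 * N / a * (192 * r * a / N : ℝ) ^ (d + 1) :=
        mul_le_mul_of_nonneg_left (pow_le_pow_left₀ (by positivity) hq _) (by positivity)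
    _ = 576 * r * (192 * r * a / N : ℝ) ^ d := by rw [pow_succ]; field_simp; ring
    _ ≤ 576 * r * (1 / 9) ^ d := by gcongr
    _ ≤ 1 / 3 := by
        rw [one_div_pow, ← div_eq_mul_one_div, div_le_iff₀ (by positivity)]
        have : (15552 * r : ℝ) ≤ 9 ^ (d + 1) := by exact_mod_cast hd
        rw [pow_succ] at this
        linarith

theorem exists_isLocallySparse_fin {r n d : ℕ} (hr : 1 ≤ r) (hd : 15552 * r ≤ 9 ^ d)
    (hdn : d ≤ n) :
    ∃ G : SimpleGraph (Fin (6912 * r * n)),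
      #G.edgeFinset = 16 * d * r * (6912 * r * n) ∧ G.IsLocallySparse (4 * n) d := by
  have hd1 : 1 ≤ d := Nat.pos_of_ne_zero fun h => by simp [h] at hd; omega
  set N := 6912 * r * n
  set m := 16 * d * r * N
  have hm : m ≤ N.choose 2 := by
    rw [Nat.choose_two_right, Nat.le_div_iff_mul_le two_pos]
    have : 32 * d * r + 1 ≤ N := by
      have := Nat.mul_le_mul_right r hdn
      simp only [N]
      nlinarith
    calc m * 2 = 32 * d * r * N := by simp only [m]; ring
      _ ≤ (N - 1) * N := Nat.mul_le_mul_right _ (by omega)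
      _ = N * (N - 1) := mul_comm _ _
  have hds : d * (4 * n) ≤ m := by
    have h1 : n ≤ N := Nat.le_mul_of_pos_left n (by omega)
    have h2 : 16 * N ≤ 16 * r * N := Nat.mul_le_mul_right N (by omega)
    calc d * (4 * n) ≤ d * (16 * r * N) := Nat.mul_le_mul_left _ (by omega)
      _ = m := by ring
  refine SimpleGraph.exists_isLocallySparse (by rwa [Fintype.card_fin]) hds ?_
  rw [Fintype.card_fin]
  exact (sum_le_sum fun a ha => first_moment_summand_le (n := n) hr hd
    (mem_Icc.mp ha).1 (mem_Icc.mp ha).2).trans_lt (sum_Icc_one_third_pow_lt_one _)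

theorem stmt_12 :
    ∃ C₀ : ℝ, 0 < C₀ ∧ ∀ r : ℕ, 2 ≤ r → ∃ n₀ : ℕ, ∀ n : ℕ, n₀ ≤ n →
      ∃ (V : Type) (_ : Fintype V) (G : SimpleGraph V),
        (G.edgeSet.ncard : ℝ) ≤ C₀ * r ^ 2 * Real.log r * n ∧
        ∀ f : Sym2 V → Fin r, ∃ (u w : V) (p : G.Walk u w),
          p.IsPath ∧ p.length + 1 = n ∧ ∃ c : Fin r, ∀ e ∈ p.edges, f e = c := by
  refine ⟨1105920, by norm_num, fun r hr => ⟨⌈8 * Real.log r⌉₊, fun n hn => ?_⟩⟩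
  have hd := mul_le_nine_pow_ceil_log hr
  set d := ⌈8 * Real.log r⌉₊
  have hd1 : 1 ≤ d := Nat.pos_of_ne_zero fun h => by simp [h] at hd; omega
  obtain ⟨G, hGm, hG⟩ := exists_isLocallySparse_fin (by omega) hd hn
  refine ⟨_, inferInstance, G, ?_, hG.exists_monochromatic_path (by omega) ?_⟩
  · rw [← SimpleGraph.coe_edgeFinset, Set.ncard_coe_finset, hGm]
    calc ((16 * d * r * (6912 * r * n) : ℕ) : ℝ) = 110592 * d * (r ^ 2 * n) := by push_cast; ring
      _ ≤ 110592 * (10 * Real.log r) * (r ^ 2 * n) := by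
          gcongr
          exact ceil_le_ten_mul_log (by exact_mod_cast hr)
      _ = 1105920 * r ^ 2 * Real.log r * n := by ring
  · rw [Fintype.card_fin, hGm]
    have : 0 < d * r * n := Nat.mul_pos (Nat.mul_pos hd1 (by omega)) (by omega)
    nlinarith
end

section
/- Let k > 0 and ℓ ≥ 2 be integers. Let G = (V,E) be a graph on more than k vertices such that every vertex subset W ⊆ V with k/2 ≤ |W| ≤ k satisfies |N_G(W)| ≥ ℓ. Then G contains a cycle of length at least ℓ+1. -/
open scoped Classical

namespace CycleAux
open SimpleGraph

variable {V : Type*} {G : SimpleGraph V}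

/-- walk connectivity within a set -/
def WIn (G : SimpleGraph V) (S : Set V) (x y : V) : Prop :=
  ∃ p : G.Walk x y, ∀ z ∈ p.support, z ∈ S

/-- the connected component of `x` within the set `S` -/
def cmp (G : SimpleGraph V) (S : Set V) (x : V) : Set V := {y | WIn G S x y}

lemma WIn.symm' {S : Set V} {x y : V} (h : WIn G S x y) : WIn G S y x := by
  obtain ⟨p, hp⟩ := h
  exact ⟨p.reverse, by intro z hz; rw [Walk.support_reverse, List.mem_reverse] at hz; exact hp z hz⟩

lemma WIn.trans' {S : Set V} {x y z : V} (h1 : WIn G S x y) (h2 : WIn G S y z) :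
    WIn G S x z := by
  obtain ⟨p, hp⟩ := h1; obtain ⟨q, hq⟩ := h2
  refine ⟨p.append q, fun w hw => ?_⟩
  rw [Walk.support_append] at hw
  rcases List.mem_append.1 hw with h | h
  · exact hp _ h
  · exact hq _ (List.mem_of_mem_tail h)

lemma mem_cmp_self {S : Set V} {x : V} (hx : x ∈ S) : x ∈ cmp G S x :=
  ⟨Walk.nil, by intro z hz; simp only [Walk.support_nil, List.mem_singleton] at hz; rwa [hz]⟩

lemma cmp_subset {S : Set V} {x : V} : cmp G S x ⊆ S := by
  rintro y ⟨p, hp⟩; exact hp y p.end_mem_support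

lemma cmp_eq_of_mem {S : Set V} {x y : V} (hy : y ∈ cmp G S x) :
    cmp G S y = cmp G S x := by
  ext z
  exact ⟨fun hz => hy.trans' hz, fun hz => (WIn.symm' hy).trans' hz⟩

lemma cmp_closure {S : Set V} {x y z : V} (hy : y ∈ cmp G S x) (hz : z ∈ S)
    (ha : G.Adj y z) : z ∈ cmp G S x := by
  obtain ⟨p, hp⟩ := hy
  refine ⟨p.concat ha, fun w hw => ?_⟩
  rw [Walk.support_concat] at hw
  rcases List.mem_append.1 hw with h | h
  · exact hp _ h
  · rw [List.mem_singleton] at h; rwa [h]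

lemma support_subset_cmp {S : Set V} :
    ∀ {x y : V} (p : G.Walk x y), (∀ z ∈ p.support, z ∈ S) →
      ∀ z ∈ p.support, z ∈ cmp G S x := by
  intro x y p
  induction p with
  | nil =>
    intro hp z hz
    simp only [Walk.support_nil, List.mem_singleton] at hz
    subst hz; exact mem_cmp_self (hp _ (by simp))
  | @cons a b c ha q ih =>
    intro hp z hz
    rw [Walk.support_cons, List.mem_cons] at hz
    have haS : a ∈ S := hp _ (by simp [Walk.support_cons])
    have hbS : b ∈ S := hp _ (by simp [Walk.support_cons])
    have hb : b ∈ cmp G S a := cmp_closure (mem_cmp_self haS) hbS ha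
    rcases hz with rfl | hz
    · exact mem_cmp_self haS
    · have := ih (fun w hw => hp w (by rw [Walk.support_cons]; exact List.mem_cons_of_mem _ hw)) z hz
      rwa [cmp_eq_of_mem hb] at this

lemma cmp_conn {S : Set V} {x y z : V} (hy : y ∈ cmp G S x) (hz : z ∈ cmp G S x) :
    WIn G (cmp G S x) y z := by
  obtain ⟨p, hp⟩ := hy; obtain ⟨q, hq⟩ := hz
  refine ⟨p.reverse.append q, fun w hw => ?_⟩
  rw [Walk.support_append] at hw
  rcases List.mem_append.1 hw with h | h
  · rw [Walk.support_reverse, List.mem_reverse] at h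
    exact support_subset_cmp p hp w h
  · exact support_subset_cmp q hq w (List.mem_of_mem_tail h)

lemma exists_adj_exit {S : Set V} {x : V} :
    ∀ {y r : V} (p : G.Walk y r), r ∉ S → (∀ z ∈ p.support, z ∈ insert r S) →
      y ∈ cmp G S x → ∃ d ∈ cmp G S x, G.Adj r d := by
  intro y r p
  induction p with
  | nil => intro hr _ hy; exact absurd (cmp_subset hy) hr
  | @cons a b c ha q ih =>
    intro hr hsup hy
    by_cases hb : b = c
    · subst hb; exact ⟨a, hy, ha.symm⟩
    · have hbS : b ∈ S := by
        have := hsup b (by rw [Walk.support_cons]; exact List.mem_cons_of_mem _ q.start_mem_support)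
        rcases Set.mem_insert_iff.1 this with h | h
        · exact absurd h hb
        · exact h
      exact ih hr (fun z hz => hsup z (by rw [Walk.support_cons]; exact List.mem_cons_of_mem _ hz))
        (cmp_closure hy hbS ha)

lemma comp_bound {ℓ : ℕ} (hℓ : 2 ≤ ℓ)
    (NLC : ∀ (u : V) (p : G.Walk u u), p.IsCycle → p.length < ℓ + 1)
    {r r₁ : V} (P : G.Walk r r₁) (hP : P.IsPath)
    {D : Set V} (hd : ∀ z ∈ P.support, z ∉ D)
    (hconn : ∀ y ∈ D, ∀ z ∈ D, WIn G D y z)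
    (hadj : ∃ d ∈ D, G.Adj r d)
    (hND : ∀ u ∈ G.extNb D, u ∈ P.support) :
    ∀ u ∈ G.extNb D, ∃ hu : u ∈ P.support, (P.takeUntil u hu).length + 2 ≤ ℓ := by
  intro u hu
  obtain ⟨hunD, w, hw, hwu⟩ := hu
  have huP := hND u ⟨hunD, w, hw, hwu⟩
  refine ⟨huP, ?_⟩
  by_contra hlen
  push_neg at hlen
  set T := P.takeUntil u huP with hT
  have hTpath : T.IsPath := hP.takeUntil huP
  have hT1 : ℓ ≤ T.length + 1 := by omega
  obtain ⟨d, hdD, hrd⟩ := hadj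
  obtain ⟨q, hq⟩ := hconn d hdD w hw
  set Q2 := (Walk.cons hrd q).bypass with hQ2def
  have hQ2path : Q2.IsPath := Walk.bypass_isPath _
  have hQ2sup : ∀ z ∈ Q2.support, z = r ∨ z ∈ D := by
    intro z hz
    have := Walk.support_bypass_subset _ hz
    rw [Walk.support_cons, List.mem_cons] at this
    rcases this with h | h
    · exact Or.inl h
    · exact Or.inr (hq z h)
  have hQ2tail : ∀ z ∈ Q2.support.tail, z ∈ D := by
    intro z hz
    rcases hQ2sup z (List.mem_of_mem_tail hz) with rfl | h
    · exfalso
      have hnd := hQ2path.support_nodup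
      rw [Walk.support_eq_cons] at hnd
      exact (List.nodup_cons.1 hnd).1 hz
    · exact h
  have hTsupP : ∀ z ∈ T.support, z ∈ P.support := fun z hz =>
    Walk.support_takeUntil_subset P huP hz
  set Q := T.reverse.append Q2 with hQdef
  have hQpath : Q.IsPath := by
    rw [Walk.isPath_def, Walk.support_append]
    refine List.Nodup.append hTpath.reverse.support_nodup ?_ ?_
    · have := hQ2path.support_nodup
      rw [Walk.support_eq_cons] at this
      exact (List.nodup_cons.1 this).2
    · intro z hz1 hz2
      rw [Walk.support_reverse, List.mem_reverse] at hz1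
      exact hd z (hTsupP z hz1) (hQ2tail z hz2)
  have hadj2 : G.Adj u w := hwu.symm
  have hcyc : (Walk.cons hadj2 Q.reverse).IsCycle := by
    rw [Walk.cons_isCycle_iff]
    refine ⟨hQpath.reverse, fun hedge => ?_⟩
    rw [Walk.edges_reverse, List.mem_reverse, hQdef, Walk.edges_append,
      List.mem_append] at hedge
    rcases hedge with hch | hch
    · have : w ∈ T.reverse.support := Walk.snd_mem_support_of_mem_edges _ hch
      rw [Walk.support_reverse, List.mem_reverse] at this
      exact hd w (hTsupP w this) hw
    · have hu2 : u ∈ Q2.support := Walk.fst_mem_support_of_mem_edges _ hch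
      rcases hQ2sup u hu2 with rfl | hc
      · have : T.length = 0 := by
          have := Walk.isPath_iff_eq_nil.1 hTpath
          rw [this]; rfl
        omega
      · exact hunD hc
  have hbig := NLC u (Walk.cons hadj2 Q.reverse) hcyc
  have hQ2len : 1 ≤ Q2.length := by
    rcases Nat.eq_zero_or_pos Q2.length with h0 | hpos
    · exfalso
      have := Walk.eq_of_length_eq_zero h0
      subst this
      exact hd _ P.start_mem_support hw
    · exact hpos
  rw [Walk.length_cons, Walk.length_reverse, hQdef, Walk.length_append,
    Walk.length_reverse] at hbig
  omega

lemma getVert_append_le :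
    ∀ {a b c : V} (p : G.Walk a b) (q : G.Walk b c) {n : ℕ}, n ≤ p.length →
      (p.append q).getVert n = p.getVert n := by
  intro a b c p
  induction p with
  | nil =>
    intro q n hn
    simp only [Walk.length_nil, Nat.le_zero] at hn
    subst hn
    rw [Walk.nil_append, Walk.getVert_zero, Walk.getVert_zero]
  | @cons a' b' c' ha p ih =>
    intro q n hn
    cases n with
    | zero => rw [Walk.cons_append, Walk.getVert_zero, Walk.getVert_zero]
    | succ m =>
      rw [Walk.cons_append, Walk.getVert_cons_succ, Walk.getVert_cons_succ]
      exact ih q (by simpa using hn)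

lemma near_card {ℓ : ℕ} {r r₁ : V} (P : G.Walk r r₁) :
    {u : V | ∃ hu : u ∈ P.support, (P.takeUntil u hu).length + 2 ≤ ℓ}.ncard ≤ ℓ - 1 := by
  have hsub : {u : V | ∃ hu : u ∈ P.support, (P.takeUntil u hu).length + 2 ≤ ℓ}
      ⊆ ↑((Finset.range (ℓ - 1)).image P.getVert) := by
    rintro u ⟨hu, hlen⟩
    simp only [Finset.coe_image, Finset.coe_range, Set.mem_image, Set.mem_Iio]
    refine ⟨(P.takeUntil u hu).length, by omega, ?_⟩
    have hspec := Walk.take_spec P hu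
    calc P.getVert (P.takeUntil u hu).length
        = ((P.takeUntil u hu).append (P.dropUntil u hu)).getVert (P.takeUntil u hu).length := by
          rw [hspec]
      _ = (P.takeUntil u hu).getVert (P.takeUntil u hu).length :=
          getVert_append_le _ _ le_rfl
      _ = u := Walk.getVert_length _
  calc {u : V | ∃ hu : u ∈ P.support, (P.takeUntil u hu).length + 2 ≤ ℓ}.ncard
      ≤ (↑((Finset.range (ℓ - 1)).image P.getVert) : Set V).ncard :=
        Set.ncard_le_ncard hsub (Finset.finite_toSet _)
    _ = ((Finset.range (ℓ - 1)).image P.getVert).card := Set.ncard_coe_finset _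
    _ ≤ (Finset.range (ℓ - 1)).card := Finset.card_image_le
    _ = ℓ - 1 := Finset.card_range _

lemma greedy {k : ℕ} [Fintype V] (hk : 0 < k) :
    ∀ (n : ℕ) (S : Set V), S.ncard ≤ n → (∀ x ∈ S, 2 * (cmp G S x).ncard ≤ k) →
      k ≤ 2 * S.ncard →
      ∃ W, W ⊆ S ∧ (∀ x ∈ W, cmp G S x ⊆ W) ∧ k ≤ 2 * W.ncard ∧ W.ncard ≤ k := by
  intro n
  induction n with
  | zero => intro S h0 _ hS; omega
  | succ n ih =>
    intro S hn hcomp hS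
    by_cases hSk : S.ncard ≤ k
    · exact ⟨S, subset_rfl, fun x _ => cmp_subset, hS, hSk⟩
    · have hne : S.Nonempty := by
        rw [Set.nonempty_iff_ne_empty]
        intro he; rw [he, Set.ncard_empty] at hSk; omega
      obtain ⟨x, hx⟩ := hne
      have hDS : cmp G S x ⊆ S := cmp_subset
      have hxD : x ∈ cmp G S x := mem_cmp_self hx
      have hcard : (S \ cmp G S x).ncard = S.ncard - (cmp G S x).ncard :=
        Set.ncard_diff hDS
      have hDn : 0 < (cmp G S x).ncard := by
        rw [Set.ncard_pos (Set.toFinite _)]; exact ⟨x, hxD⟩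
      have hsame : ∀ y ∈ S \ cmp G S x, cmp G (S \ cmp G S x) y = cmp G S y := by
        intro y hy
        apply Set.Subset.antisymm
        · rintro z ⟨p, hp⟩
          exact ⟨p, fun w hw => (hp w hw).1⟩
        · rintro z ⟨p, hp⟩
          refine ⟨p, fun w hw => ⟨hp w hw, fun hwD => ?_⟩⟩
          have hwc : w ∈ cmp G S y := support_subset_cmp p hp w hw
          have h1 : cmp G S w = cmp G S y := cmp_eq_of_mem hwc
          have h2 : cmp G S w = cmp G S x := cmp_eq_of_mem hwD
          have : y ∈ cmp G S x := by
            rw [← h2, h1]; exact mem_cmp_self hy.1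
          exact hy.2 this
      have hcomp' : ∀ y ∈ S \ cmp G S x, 2 * (cmp G (S \ cmp G S x) y).ncard ≤ k := by
        intro y hy; rw [hsame y hy]; exact hcomp y hy.1
      have h2D : 2 * (cmp G S x).ncard ≤ k := hcomp x hx
      have hDle : (cmp G S x).ncard ≤ S.ncard := Set.ncard_le_ncard hDS S.toFinite
      obtain ⟨W, hWS', hWcl, hWk, hWk2⟩ := ih (S \ cmp G S x) (by omega) hcomp' (by omega)
      refine ⟨W, hWS'.trans Set.diff_subset, ?_, hWk, hWk2⟩
      intro y hy
      rw [← hsame y (hWS' hy)]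
      exact hWcl y hy

lemma main_rec {k ℓ : ℕ} [Fintype V] (hk : 0 < k) (hℓ : 2 ≤ ℓ)
    (h : ∀ W : Set V, (k : ℝ) / 2 ≤ (W.ncard : ℝ) → W.ncard ≤ k → ℓ ≤ (G.extNb W).ncard)
    (NLC : ∀ (u : V) (p : G.Walk u u), p.IsCycle → p.length < ℓ + 1) :
    ∀ (n : ℕ) (S : Set V) (r r₁ : V) (P : G.Walk r r₁), S.ncard ≤ n → k ≤ S.ncard →
      P.IsPath → (∀ z ∈ P.support, z ∉ S) →
      (∀ x ∈ S, ∃ d ∈ cmp G S x, G.Adj r d) →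
      (∀ x ∈ S, ∀ u ∈ G.extNb (cmp G S x), u ∈ P.support) → False := by
  intro n
  induction n with
  | zero => intro S r r₁ P h0 hkS _ _ _ _; omega
  | succ n ih =>
    intro S r r₁ P hn hkS hP hPd hadj hext
    by_cases hbig : ∃ x ∈ S, k < (cmp G S x).ncard
    · obtain ⟨x, hxS, hxbig⟩ := hbig
      obtain ⟨r'', hr''C, hadj''⟩ := hadj x hxS
      have hCS : cmp G S x ⊆ S := cmp_subset
      have hr''S : r'' ∈ S := hCS hr''C
      have hinsert : insert r'' (cmp G S x \ {r''}) = cmp G S x := by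
        rw [Set.insert_diff_singleton, Set.insert_eq_self.2 hr''C]
      set S₂ := cmp G S x \ {r''} with hS₂
      have hr''nS₂ : r'' ∉ S₂ := fun hc => hc.2 rfl
      have hS₂card : S₂.ncard = (cmp G S x).ncard - 1 :=
        Set.ncard_diff_singleton_of_mem hr''C
      have hCcard : (cmp G S x).ncard ≤ S.ncard := Set.ncard_le_ncard hCS S.toFinite
      set P₂ := Walk.cons hadj''.symm P with hP₂
      have hP₂path : P₂.IsPath := by
        rw [hP₂, Walk.cons_isPath_iff]
        exact ⟨hP, fun hc => hPd r'' hc hr''S⟩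
      have hS₂sub : S₂ ⊆ cmp G S x := Set.diff_subset
      have hP₂d : ∀ z ∈ P₂.support, z ∉ S₂ := by
        intro z hz
        rw [hP₂, Walk.support_cons, List.mem_cons] at hz
        rcases hz with rfl | hz
        · exact hr''nS₂
        · exact fun hc => hPd z hz (hCS (hS₂sub hc))
      have hadj₂ : ∀ y ∈ S₂, ∃ d ∈ cmp G S₂ y, G.Adj r'' d := by
        intro y hyS₂
        obtain ⟨p, hp⟩ := cmp_conn (hS₂sub hyS₂) hr''C
        refine exists_adj_exit (S := S₂) p hr''nS₂ ?_ (mem_cmp_self hyS₂)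
        intro z hz; rw [hinsert]; exact hp z hz
      have hext₂ : ∀ y ∈ S₂, ∀ u ∈ G.extNb (cmp G S₂ y), u ∈ P₂.support := by
        intro y hyS₂ u hu
        obtain ⟨hucmp, w, hwcmp, hwu⟩ := hu
        have hwS₂ : w ∈ S₂ := cmp_subset hwcmp
        by_cases hur : u = r''
        · subst hur; rw [hP₂, Walk.support_cons]; exact List.mem_cons_self
        · by_cases huS₂ : u ∈ S₂
          · exact absurd (cmp_closure hwcmp huS₂ hwu) hucmp
          · have huC : u ∉ cmp G S x := by
              intro hc
              exact huS₂ ⟨hc, fun hc2 => hur hc2⟩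
            have humem : u ∈ G.extNb (cmp G S x) := ⟨huC, w, hS₂sub hwS₂, hwu⟩
            have := hext x hxS u humem
            rw [hP₂, Walk.support_cons]; exact List.mem_cons_of_mem _ this
      exact ih S₂ r'' r₁ P₂ (by omega) (by omega) hP₂path hP₂d hadj₂ hext₂
    · push_neg at hbig
      set NS := {u : V | ∃ hu : u ∈ P.support, (P.takeUntil u hu).length + 2 ≤ ℓ} with hNS
      have hnear : ∀ x ∈ S, ∀ u ∈ G.extNb (cmp G S x), u ∈ NS := by
        intro x hxS u hu
        exact comp_bound hℓ NLC P hP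
          (fun z hz hc => hPd z hz (cmp_subset hc))
          (fun y hy z hz => cmp_conn hy hz)
          (hadj x hxS) (hext x hxS) u hu
      have hNScard : NS.ncard ≤ ℓ - 1 := near_card P
      have finish : ∀ W : Set V, W ⊆ S → (∀ x ∈ W, cmp G S x ⊆ W) →
          k ≤ 2 * W.ncard → W.ncard ≤ k → False := by
        intro W hWS hWcl hW1 hW2
        have hWN : G.extNb W ⊆ NS := by
          rintro u ⟨huW, w, hwW, hwu⟩
          have hwS : w ∈ S := hWS hwW
          have hucmp : u ∉ cmp G S w := fun hc => huW (hWcl w hwW hc)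
          exact hnear w hwS u ⟨hucmp, w, mem_cmp_self hwS, hwu⟩
        have hcast : (k : ℝ) / 2 ≤ (W.ncard : ℝ) := by
          rw [div_le_iff₀ (by norm_num : (0:ℝ) < 2)]
          exact_mod_cast (by omega : k ≤ W.ncard * 2)
        have hh := h W hcast hW2
        have hle : (G.extNb W).ncard ≤ NS.ncard := Set.ncard_le_ncard hWN (Set.toFinite _)
        omega
      by_cases hb2 : ∃ x ∈ S, k ≤ 2 * (cmp G S x).ncard
      · obtain ⟨x, hxS, hx2⟩ := hb2
        exact finish (cmp G S x) cmp_subset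
          (fun y hy => (cmp_eq_of_mem hy).subset) hx2 (hbig x hxS)
      · push_neg at hb2
        obtain ⟨W, hWS, hWcl, hW1, hW2⟩ := greedy hk S.ncard S le_rfl
          (fun x hx => (hb2 x hx).le) (by omega)
        exact finish W hWS hWcl hW1 hW2

end CycleAux

theorem stmt_13 {V : Type*} [Fintype V] (G : SimpleGraph V) (k ℓ : ℕ)
    (hk : 0 < k) (hℓ : 2 ≤ ℓ) (hn : k < Fintype.card V)
    (h : ∀ W : Set V, (k : ℝ) / 2 ≤ (W.ncard : ℝ) → W.ncard ≤ k →
      ℓ ≤ (G.extNb W).ncard) :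
    ∃ (u : V) (p : G.Walk u u), p.IsCycle ∧ ℓ + 1 ≤ p.length := by
  classical
  by_contra hcon
  push_neg at hcon
  have NLC : ∀ (u : V) (p : G.Walk u u), p.IsCycle → p.length < ℓ + 1 := by
    intro u p hp
    have := hcon u p hp
    omega
  have huniv : k < (Set.univ : Set V).ncard := by
    rwa [Set.ncard_univ, Nat.card_eq_fintype_card]
  open CycleAux in
  by_cases hbig : ∃ v : V, k < (cmp G Set.univ v).ncard
  · obtain ⟨v, hv⟩ := hbig
    have hvC : v ∈ cmp G Set.univ v := mem_cmp_self (Set.mem_univ v)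
    set S := cmp G Set.univ v \ {v} with hS
    have hvnS : v ∉ S := fun hc => hc.2 rfl
    have hinsert : insert v S = cmp G Set.univ v := by
      rw [hS, Set.insert_diff_singleton, Set.insert_eq_self.2 hvC]
    have hScard : S.ncard = (cmp G Set.univ v).ncard - 1 :=
      Set.ncard_diff_singleton_of_mem hvC
    refine main_rec hk hℓ h NLC S.ncard S v v SimpleGraph.Walk.nil le_rfl (by omega)
      SimpleGraph.Walk.IsPath.nil ?_ ?_ ?_
    · intro z hz
      simp only [SimpleGraph.Walk.support_nil, List.mem_singleton] at hz
      subst hz; exact hvnS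
    · intro x hxS
      obtain ⟨p, hp⟩ := cmp_conn (Set.diff_subset hxS : x ∈ cmp G Set.univ v) hvC
      refine exists_adj_exit (S := S) p hvnS ?_ (mem_cmp_self hxS)
      intro z hz; rw [hinsert]; exact hp z hz
    · intro x hxS u hu
      obtain ⟨hucmp, w, hwcmp, hwu⟩ := hu
      have hwS : w ∈ S := cmp_subset hwcmp
      simp only [SimpleGraph.Walk.support_nil, List.mem_singleton]
      by_cases hur : u = v
      · exact hur
      · by_cases huS : u ∈ S
        · exact absurd (cmp_closure hwcmp huS hwu) hucmp
        · exfalso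
          have huC : u ∉ cmp G Set.univ v := by
            intro hc; exact huS ⟨hc, fun hc2 => hur hc2⟩
          have hwC : w ∈ cmp G Set.univ v := Set.diff_subset hwS
          exact huC (cmp_closure hwC (Set.mem_univ u) hwu)
  · push_neg at hbig
    have hempty : ∀ W : Set V, (∀ x ∈ W, cmp G Set.univ x ⊆ W) → G.extNb W = ∅ := by
      intro W hWcl
      ext u
      simp only [Set.mem_empty_iff_false, iff_false]
      rintro ⟨huW, w, hwW, hwu⟩
      exact huW (hWcl w hwW (cmp_closure (mem_cmp_self (Set.mem_univ w)) (Set.mem_univ u) hwu))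
    have finish : ∀ W : Set V, (∀ x ∈ W, cmp G Set.univ x ⊆ W) →
        k ≤ 2 * W.ncard → W.ncard ≤ k → False := by
      intro W hWcl hW1 hW2
      have hcast : (k : ℝ) / 2 ≤ (W.ncard : ℝ) := by
        rw [div_le_iff₀ (by norm_num : (0:ℝ) < 2)]
        exact_mod_cast (by omega : k ≤ W.ncard * 2)
      have hh := h W hcast hW2
      rw [hempty W hWcl, Set.ncard_empty] at hh
      omega
    by_cases hb2 : ∃ v : V, k ≤ 2 * (cmp G Set.univ v).ncard
    · obtain ⟨v, hv2⟩ := hb2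
      exact finish (cmp G Set.univ v)
        (fun y hy => (cmp_eq_of_mem hy).subset) hv2 (hbig v)
    · push_neg at hb2
      obtain ⟨W, hWS, hWcl, hW1, hW2⟩ := greedy hk (Set.univ : Set V).ncard Set.univ le_rfl
        (fun x _ => (hb2 x).le) (by omega)
      exact finish W hWcl hW1 hW2
end
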